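/- arXiv:1702.05989 — 4 statements merged into one kernel-verified Lean document; each statement's English description precedes it below -/
import Mathlib

section
/- Let T be a square-tiled interval exchange transformation with α irrational and with (p_l,p_r) acting transitively (so T is minimal). If α has unbounded partial quotients, then the measure-preserving system (X,T,μ) is rigid. -/
open MeasureTheory Filter Set
open scoped ENNReal

/-- The square-tiled interval exchange transformation `T = T_α` on
`X = [0,1) × {1,…,d}` (modelled as `ℝ × Fin d`, concentrating on `[0,1) × Fin d`):
`T(x,i) = ({x+α}, p_l i)` if `x ∈ [0,1−α)` and `T(x,i) = ({x+α}, p_r i)` if `x ∈ [1−α,1)`. -/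
noncomputable def sqT (d : ℕ) (α : ℝ) (pl pr : Equiv.Perm (Fin d)) (z : ℝ × Fin d) :
    ℝ × Fin d :=
  (Int.fract (z.1 + α), if Int.fract z.1 < 1 - α then pl z.2 else pr z.2)

/-- The invariant probability measure `μ = (1/d)·(Lebesgue on [0,1) × counting)`. -/
noncomputable def muX (d : ℕ) : Measure (ℝ × Fin d) :=
  ((d : ℝ≥0∞))⁻¹ • ((volume.restrict (Set.Ico (0 : ℝ) 1)).prod Measure.count)

/-- The `(k+1)`-st partial quotient of `α ∈ (0,1)`, obtained by iterating the Gauss map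
`x ↦ {1/x}`: for irrational `α = [0; a_1, a_2, …]` one has `pq α k = a_{k+1}`. -/
noncomputable def pq (α : ℝ) (k : ℕ) : ℤ :=
  ⌊((fun x : ℝ => Int.fract x⁻¹)^[k] α)⁻¹⌋

/-- `α` has bounded partial quotients. -/
def BoundedPQ (α : ℝ) : Prop :=
  ∃ B : ℤ, ∀ k : ℕ, pq α k ≤ B

/-- A measure-preserving system `(Y,S,ν)` is rigid if there is a sequence `q_n → ∞`
with `ν(S^{q_n}A Δ A) → 0` for every measurable set `A`. -/
def Rigid {Y : Type*} [MeasurableSpace Y] (ν : Measure Y) (S : Y → Y) : Prop :=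
  ∃ q : ℕ → ℕ, Tendsto q atTop atTop ∧
    ∀ A : Set Y, MeasurableSet A →
      Tendsto (fun n => ν (symmDiff ((S^[q n]) ⁻¹' A) A)) atTop (nhds 0)

/-! Along the denominators `Q` of the convergents that precede a large partial quotient `a`, the
distance `‖Qα‖` from `Qα` to the integers satisfies `Q‖Qα‖ ≤ 1/a`, which can be made as small as we
like. Put `m = d!`. Except on a set of measure `O(m² Q‖Qα‖)`, the orbit segments of length `Q`
starting at `x, x + Qα, …, x + (m-1)Qα` pass through `[0, 1-α)` and `[1-α, 1)` in the same order.
For such `x` the permutation picked up in `mQ` steps is the `m`-th power of the one picked up in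
`Q` steps, which is the identity. So `T^{mQ}` agrees, off a small set, with the rotation by
`m(Qα - P)` on every copy of `[0,1)`, and a rotation by a small angle moves each measurable set
only a little. -/

open scoped symmDiff Topology

lemma Int.fract_fract_add (z s : ℝ) : Int.fract (Int.fract z + s) = Int.fract (z + s) := by
  rw [show Int.fract z + s = z + s - ⌊z⌋ by rw [Int.fract]; ring, Int.fract_sub_intCast]

lemma volume_fract_preimage_inter_Ioc {S : Set ℝ} (hS : MeasurableSet S) (t : ℝ) :
    volume (Int.fract ⁻¹' S ∩ Ioc t (t + 1)) = volume (S ∩ Ico 0 1) := by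
  have hinv : ∀ g : AddSubgroup.zmultiples (1 : ℝ), (g +ᵥ ·) ⁻¹' (Int.fract ⁻¹' S) =
      Int.fract ⁻¹' S := by
    rintro ⟨_, n, rfl⟩
    ext x
    simp [AddSubgroup.vadd_def, Int.fract_intCast_add]
  refine ((isAddFundamentalDomain_Ioc one_pos t).measure_set_eq
    (isAddFundamentalDomain_Ioc one_pos 0) (measurable_fract hS) hinv).trans ?_
  rw [zero_add, measure_congr ((ae_eq_refl (Int.fract ⁻¹' S)).inter Ico_ae_eq_Ioc).symm]
  congr 1
  ext x
  simp +contextual [Int.fract_eq_self.mpr]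

lemma measurePreserving_fract_add (c : ℝ) :
    MeasurePreserving (fun x => Int.fract (x + c)) (volume.restrict (Ico 0 1))
      (volume.restrict (Ico 0 1)) := by
  have hmeas : Measurable fun x : ℝ => Int.fract (x + c) := (measurable_add_const c).fract
  refine ⟨hmeas, Measure.ext fun S hS => ?_⟩
  rw [Measure.map_apply hmeas hS, Measure.restrict_apply (hmeas hS), Measure.restrict_apply hS,
    ← volume_fract_preimage_inter_Ioc hS c, ← measure_congr ((ae_eq_refl _).inter Ico_ae_eq_Ioc),
    ← measure_preimage_add_right volume c (Int.fract ⁻¹' S ∩ _), preimage_inter,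
    preimage_add_const_Ico, sub_self, add_sub_cancel_left]
  rfl

lemma tendsto_volume_fract_add_preimage_symmDiff {S : Set ℝ} (hS : MeasurableSet S) :
    Tendsto (fun t => volume.restrict (Ico (0 : ℝ) 1)
      (((fun x => Int.fract (x + t)) ⁻¹' S) ∆ S)) (𝓝 0) (𝓝 0) := by
  -- for `|t| ≤ 1` the set agrees on `[0,1)` with `(S' - t) ∆ S'`
  set S' := Int.fract ⁻¹' S ∩ Icc (-1) 2
  have hcont : Continuous fun t : ℝ => ContinuousMap.addRight t :=
    (ContinuousMap.curry ⟨fun p : ℝ × ℝ => p.2 + p.1, by fun_prop⟩).continuous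
  have hS' : volume S' ≠ ⊤ :=
    (measure_mono inter_subset_right).trans_lt measure_Icc_lt_top |>.ne
  have hshift := tendsto_measure_symmDiff_preimage_nhds_zero (hcont.tendsto 0)
    (Eventually.of_forall fun t => measurePreserving_add_right volume t)
    (measurePreserving_add_right volume 0)
    ((measurable_fract hS).inter measurableSet_Icc).nullMeasurableSet hS'
  refine tendsto_of_tendsto_of_tendsto_of_le_of_le' tendsto_const_nhds hshift
    (Eventually.of_forall fun _ => zero_le) ?_
  filter_upwards [Icc_mem_nhds neg_one_lt_zero one_pos] with t ht
  refine (measure_mono_ae ?_).trans (Measure.restrict_le_self _)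
  filter_upwards [ae_restrict_mem measurableSet_Ico] with x hx hmem
  have hxt : x + t ∈ Icc (-1 : ℝ) 2 := ⟨by linarith [hx.1, ht.1], by linarith [hx.2, ht.2]⟩
  have hx' : x ∈ Icc (-1 : ℝ) 2 := ⟨by linarith [hx.1], by linarith [hx.2]⟩
  change x ∈ ((fun x => Int.fract (x + t)) ⁻¹' S) ∆ S at hmem
  change x ∈ (ContinuousMap.addRight t ⁻¹' S') ∆ (ContinuousMap.addRight 0 ⁻¹' S')
  simpa only [S', mem_symmDiff, mem_preimage, mem_inter_iff, ContinuousMap.coe_addRight,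
    add_zero, hxt, hx', and_true, Int.fract_eq_self.mpr hx] using hmem

def crossing (c s : ℝ) : Set ℝ := {y | ¬(Int.fract (y + s) < c ↔ Int.fract y < c)}

lemma measurableSet_crossing (c s : ℝ) : MeasurableSet (crossing c s) := by
  unfold crossing
  measurability

lemma volume_crossing_le (c s τ : ℝ) (N : ℤ) (h : |s - N| ≤ τ) :
    volume.restrict (Ico (0 : ℝ) 1) (crossing c s) ≤ ENNReal.ofReal (4 * τ) := by
  obtain ⟨hτl, hτr⟩ := abs_le.mp h
  -- away from `0`, `1` and `c`, adding `s` moves `y` by `s - N` without crossing any of them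
  have hsub : crossing c s ∩ Ico 0 1 ⊆ Icc 0 τ ∪ Icc (1 - τ) 1 ∪ Icc (c - τ) (c + τ) := by
    rintro y ⟨hy, hy0, hy1⟩
    by_contra hout
    simp only [mem_union, mem_Icc, not_or, not_and, not_le] at hout
    obtain ⟨⟨hyτ, hy1τ⟩, hyc⟩ := hout
    have hτy : τ < y := hyτ hy0
    have hy1τ' : y < 1 - τ := not_le.mp fun h' => (hy1τ h').not_gt hy1
    have hys : Int.fract (y + s) = y + (s - N) := by
      rw [show y + s = y + (s - N) + N by ring, Int.fract_add_intCast,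
        Int.fract_eq_self.mpr ⟨by linarith, by linarith⟩]
    apply hy
    rw [hys, Int.fract_eq_self.mpr ⟨hy0, hy1⟩]
    by_cases hc : c - τ ≤ y
    · have hcy := hyc hc
      constructor <;> intro <;> linarith
    · constructor <;> intro <;> linarith
  calc volume.restrict (Ico (0 : ℝ) 1) (crossing c s)
      ≤ volume (Icc 0 τ ∪ Icc (1 - τ) 1 ∪ Icc (c - τ) (c + τ)) := by
        rw [Measure.restrict_apply' measurableSet_Ico]
        exact measure_mono hsub
    _ ≤ volume (Icc 0 τ) + volume (Icc (1 - τ) 1) + volume (Icc (c - τ) (c + τ)) :=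
        (measure_union_le _ _).trans (add_le_add_left (measure_union_le _ _) _)
    _ = ENNReal.ofReal (4 * τ) := by
        have hτ : 0 ≤ τ := (abs_nonneg _).trans h
        rw [Real.volume_Icc, Real.volume_Icc, Real.volume_Icc,
          ← ENNReal.ofReal_add (by linarith) (by linarith),
          ← ENNReal.ofReal_add (by linarith) (by linarith)]
        congr 1
        ring

section ContinuedFraction

variable {α : ℝ}

noncomputable def gaussIter (α : ℝ) (k : ℕ) : ℝ := (fun x : ℝ => Int.fract x⁻¹)^[k] α

lemma pq_eq_floor_inv_gaussIter (α : ℝ) (k : ℕ) : pq α k = ⌊(gaussIter α k)⁻¹⌋ := rfl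

lemma gaussIter_succ (α : ℝ) (k : ℕ) :
    gaussIter α (k + 1) = Int.fract (gaussIter α k)⁻¹ := by
  rw [gaussIter, Function.iterate_succ_apply']
  rfl

lemma gaussIter_succ_eq_inv_sub_pq (α : ℝ) (k : ℕ) :
    gaussIter α (k + 1) = (gaussIter α k)⁻¹ - pq α k := by
  rw [gaussIter_succ, Int.fract, pq_eq_floor_inv_gaussIter]

lemma irrational_gaussIter (hirr : Irrational α) (k : ℕ) : Irrational (gaussIter α k) := by
  induction k with
  | zero => exact hirr
  | succ k ih => rw [gaussIter_succ_eq_inv_sub_pq]; exact ih.inv.sub_intCast _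

lemma gaussIter_pos (hirr : Irrational α) (h0 : 0 < α) (k : ℕ) : 0 < gaussIter α k := by
  cases k with
  | zero => exact h0
  | succ k =>
    refine lt_of_le_of_ne ?_ (irrational_gaussIter hirr (k + 1)).ne_zero.symm
    rw [gaussIter_succ]
    exact Int.fract_nonneg _

lemma gaussIter_lt_one (h1 : α < 1) (k : ℕ) : gaussIter α k < 1 := by
  cases k with
  | zero => exact h1
  | succ k => rw [gaussIter_succ]; exact Int.fract_lt_one _

lemma one_le_pq (hirr : Irrational α) (h0 : 0 < α) (h1 : α < 1) (k : ℕ) : 1 ≤ pq α k := by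
  rw [pq_eq_floor_inv_gaussIter, Int.le_floor, Int.cast_one,
    one_le_inv₀ (gaussIter_pos hirr h0 k)]
  exact (gaussIter_lt_one h1 k).le

-- Shifted indexing: `cfNum α (k + 1) / cfDen α (k + 1)` is the convergent `[0; a₁, …, aₖ]`
-- of `α = [0; a₁, a₂, …]`, where `aⱼ = pq α (j - 1)`.
noncomputable def cfDen (α : ℝ) : ℕ → ℤ
  | 0 => 0
  | 1 => 1
  | k + 2 => pq α k * cfDen α (k + 1) + cfDen α k

noncomputable def cfNum (α : ℝ) : ℕ → ℤ
  | 0 => 1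
  | 1 => 0
  | k + 2 => pq α k * cfNum α (k + 1) + cfNum α k

noncomputable def gaussProd (α : ℝ) (k : ℕ) : ℝ := ∏ j ∈ Finset.range k, gaussIter α j

lemma gaussProd_pos (hirr : Irrational α) (h0 : 0 < α) (k : ℕ) : 0 < gaussProd α k :=
  Finset.prod_pos fun j _ => gaussIter_pos hirr h0 j

lemma gaussProd_succ (α : ℝ) (k : ℕ) : gaussProd α (k + 1) = gaussProd α k * gaussIter α k :=
  Finset.prod_range_succ _ _

lemma gaussProd_add_two (hirr : Irrational α) (h0 : 0 < α) (k : ℕ) :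
    gaussProd α (k + 2) = gaussProd α k - pq α k * gaussProd α (k + 1) := by
  have hk := (gaussIter_pos hirr h0 k).ne'
  rw [gaussProd_succ, gaussProd_succ, gaussIter_succ_eq_inv_sub_pq]
  field_simp

lemma cfDen_mul_sub_cfNum (hirr : Irrational α) (h0 : 0 < α) (k : ℕ) :
    (cfDen α k : ℝ) * α - cfNum α k = (-1) ^ (k + 1) * gaussProd α k := by
  induction k using Nat.twoStepInduction with
  | zero => simp [cfDen, cfNum, gaussProd]
  | one => simp [cfDen, cfNum, gaussProd, gaussIter]
  | more k ih₀ ih₁ =>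
    rw [cfDen, cfNum, gaussProd_add_two hirr h0]
    push_cast
    linear_combination (pq α k : ℝ) * ih₁ + ih₀

lemma cfDen_mul_gaussProd_add (hirr : Irrational α) (h0 : 0 < α) (k : ℕ) :
    (cfDen α (k + 1) : ℝ) * gaussProd α k + cfDen α k * gaussProd α (k + 1) = 1 := by
  induction k with
  | zero => simp [cfDen, gaussProd]
  | succ k ih =>
    rw [cfDen, gaussProd_add_two hirr h0]
    push_cast
    linear_combination ih

lemma cfDen_mono (hirr : Irrational α) (h0 : 0 < α) (h1 : α < 1) : Monotone (cfDen α) := by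
  have h : ∀ k, 0 ≤ cfDen α k ∧ cfDen α k ≤ cfDen α (k + 1) := by
    intro k
    induction k with
    | zero => simp [cfDen]
    | succ k ih =>
      have ha := one_le_pq hirr h0 h1 k
      have hq := ih.1.trans ih.2
      refine ⟨hq, ?_⟩
      rw [cfDen]
      nlinarith
  exact monotone_nat_of_le_succ fun k => (h k).2

lemma le_cfDen_succ (hirr : Irrational α) (h0 : 0 < α) (h1 : α < 1) (k : ℕ) :
    (k : ℤ) ≤ cfDen α (k + 1) := by
  induction k using Nat.twoStepInduction with
  | zero => simp [cfDen]
  | one => simpa [cfDen] using one_le_pq hirr h0 h1 0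
  | more k _ ih =>
    have ha := one_le_pq hirr h0 h1 (k + 1)
    have hq : 1 ≤ cfDen α (k + 1) := cfDen_mono hirr h0 h1 (by omega : 1 ≤ k + 1)
    rw [cfDen]
    push_cast at ih ⊢
    nlinarith

lemma exists_le_mul_abs_sub_le (hirr : Irrational α) (h0 : 0 < α) (h1 : α < 1) (k : ℕ) :
    ∃ Q : ℕ, ∃ P : ℤ, k ≤ Q ∧ (Q : ℝ) * |Q * α - P| ≤ (pq α k : ℝ)⁻¹ := by
  have hQ := le_cfDen_succ hirr h0 h1 k
  have hQ0 : 0 ≤ cfDen α (k + 1) := (Nat.cast_nonneg k).trans hQ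
  refine ⟨(cfDen α (k + 1)).toNat, cfNum α (k + 1), (Int.le_toNat hQ0).mpr hQ, ?_⟩
  have hcast : ((cfDen α (k + 1)).toNat : ℝ) = cfDen α (k + 1) := by
    exact_mod_cast Int.toNat_of_nonneg hQ0
  have hβ := gaussIter_pos hirr h0 k
  have hprod := cfDen_mul_gaussProd_add hirr h0 k
  have hq : (0 : ℝ) ≤ cfDen α k := by exact_mod_cast cfDen_mono hirr h0 h1 (Nat.zero_le k)
  have hrest := mul_nonneg hq (gaussProd_pos hirr h0 (k + 1)).le
  rw [hcast, cfDen_mul_sub_cfNum hirr h0, abs_mul, abs_pow, abs_neg, abs_one, one_pow, one_mul,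
    abs_of_pos (gaussProd_pos hirr h0 _), gaussProd_succ]
  calc (cfDen α (k + 1) : ℝ) * (gaussProd α k * gaussIter α k)
      = (cfDen α (k + 1) * gaussProd α k) * gaussIter α k := by ring
    _ ≤ 1 * gaussIter α k := by gcongr; linarith
    _ ≤ (pq α k : ℝ)⁻¹ := by
        rw [one_mul, le_inv_comm₀ hβ (by exact_mod_cast one_le_pq hirr h0 h1 k)]
        exact Int.floor_le _

lemma exists_ge_lt_pq (hub : ¬BoundedPQ α) (n : ℕ) : ∃ k ≥ n, (n : ℤ) < pq α k := by
  have hfreq : ∃ᶠ k in atTop, (n : ℤ) < pq α k := by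
    intro hev
    obtain ⟨B, hB⟩ :=
      (isBoundedUnder_of_eventually_le (hev.mono fun _ => le_of_not_gt)).bddAbove_range
    exact hub ⟨B, fun k => hB (mem_range_self k)⟩
  exact frequently_atTop.mp hfreq n

lemma exists_seq_mul_abs_sub_tendsto_zero (hirr : Irrational α) (h0 : 0 < α) (h1 : α < 1)
    (hub : ¬BoundedPQ α) : ∃ (Q : ℕ → ℕ) (P : ℕ → ℤ), Tendsto Q atTop atTop ∧
      Tendsto (fun n => (Q n : ℝ) * |Q n * α - P n|) atTop (𝓝 0) := by
  choose k hk hpq using exists_ge_lt_pq hub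
  choose Q P hQ hQP using fun n => exists_le_mul_abs_sub_le hirr h0 h1 (k n)
  refine ⟨Q, P, tendsto_atTop_mono (fun n => (hk n).trans (hQ n)) tendsto_id, ?_⟩
  refine squeeze_zero (fun n => by positivity) (fun n => (hQP n).trans ?_)
    tendsto_one_div_add_atTop_nhds_zero_nat
  rw [one_div]
  exact inv_anti₀ (by positivity) (by exact_mod_cast hpq n)

end ContinuedFraction

lemma muX_le_sum (d : ℕ) (E : Set (ℝ × Fin d)) :
    muX d E ≤ (d : ℝ≥0∞)⁻¹ * ∑ i, volume.restrict (Ico (0 : ℝ) 1) {x | (x, i) ∈ E} := by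
  have hE : E ⊆ ⋃ i, {x | (x, i) ∈ E} ×ˢ {i} := fun z hz => mem_iUnion.mpr ⟨z.2, hz, rfl⟩
  rw [muX, Measure.smul_apply, smul_eq_mul]
  gcongr
  calc _ ≤ _ := measure_mono hE
    _ ≤ _ := measure_iUnion_fintype_le _ _
    _ = _ := by simp only [Measure.prod_prod, Measure.count_singleton, mul_one]

lemma tendsto_muX_preimage_symmDiff {ι : Type*} {l : Filter ι} {d : ℕ}
    {S : ι → ℝ × Fin d → ℝ × Fin d} {t : ι → ℝ} {B : ι → Set ℝ} (ht : Tendsto t l (𝓝 0))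
    (hB : Tendsto (fun n => volume.restrict (Ico (0 : ℝ) 1) (B n)) l (𝓝 0))
    (hS : ∀ n, ∀ x ∈ Ico (0 : ℝ) 1, x ∉ B n → ∀ i, S n (x, i) = (Int.fract (x + t n), i))
    {A : Set (ℝ × Fin d)} (hA : MeasurableSet A) :
    Tendsto (fun n => muX d ((S n ⁻¹' A) ∆ A)) l (𝓝 0) := by
  set R : ι → Fin d → Set ℝ := fun n i =>
    ((fun x => Int.fract (x + t n)) ⁻¹' {x | (x, i) ∈ A}) ∆ {x | (x, i) ∈ A}
  have hfibre : ∀ n i, volume.restrict (Ico (0 : ℝ) 1) {x | (x, i) ∈ (S n ⁻¹' A) ∆ A} ≤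
      volume.restrict (Ico (0 : ℝ) 1) (B n) + volume.restrict (Ico (0 : ℝ) 1) (R n i) := by
    refine fun n i => (measure_mono_ae ?_).trans (measure_union_le _ _)
    filter_upwards [ae_restrict_mem measurableSet_Ico] with x hx hmem
    by_cases hxB : x ∈ B n
    · exact Or.inl hxB
    · change (x, i) ∈ (S n ⁻¹' A) ∆ A at hmem
      rw [mem_symmDiff, mem_preimage, hS n x hx hxB i] at hmem
      exact Or.inr hmem
  have hR : ∀ i, Tendsto (fun n => volume.restrict (Ico (0 : ℝ) 1) (R n i)) l (𝓝 0) := fun i =>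
    (tendsto_volume_fract_add_preimage_symmDiff (hA.preimage measurable_prodMk_right)).comp ht
  have hsum : Tendsto (fun n => (d : ℝ≥0∞)⁻¹ * ∑ i, (volume.restrict (Ico (0 : ℝ) 1) (B n) +
      volume.restrict (Ico (0 : ℝ) 1) (R n i))) l (𝓝 0) := by
    rcases eq_or_ne d 0 with rfl | hd
    · simpa using tendsto_const_nhds
    simpa only [add_zero, Finset.sum_const_zero, mul_zero] using ENNReal.Tendsto.const_mul
      (tendsto_finsetSum Finset.univ fun i _ => hB.add (hR i)) (Or.inr (by simpa using hd))
  refine tendsto_of_tendsto_of_tendsto_of_le_of_le tendsto_const_nhds hsum (fun _ => zero_le)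
    fun n => (muX_le_sum d _).trans ?_
  gcongr with i
  exact hfibre n i

section Cocycle

variable {d : ℕ} (α : ℝ) (pl pr : Equiv.Perm (Fin d))

noncomputable def stepPerm (y : ℝ) : Equiv.Perm (Fin d) :=
  if Int.fract y < 1 - α then pl else pr

noncomputable def cocycle : ℕ → ℝ → Equiv.Perm (Fin d)
  | 0, _ => 1
  | n + 1, x => stepPerm α pl pr (x + n * α) * cocycle n x

lemma sqT_iterate_of_mem_Ico (n : ℕ) {x : ℝ} (hx : x ∈ Ico (0 : ℝ) 1) (i : Fin d) :
    (sqT d α pl pr)^[n] (x, i) = (Int.fract (x + n * α), cocycle α pl pr n x i) := by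
  induction n with
  | zero => simp [cocycle, Int.fract_eq_self.mpr hx]
  | succ n ih =>
    rw [Function.iterate_succ_apply', ih]
    simp only [sqT, Int.fract_fract_add, Int.fract_fract, cocycle, stepPerm, Nat.cast_succ,
      Equiv.Perm.mul_apply, add_mul, one_mul, add_assoc]
    split_ifs <;> rfl

lemma cocycle_add (a b : ℕ) (x : ℝ) :
    cocycle α pl pr (a + b) x = cocycle α pl pr a (x + b * α) * cocycle α pl pr b x := by
  induction a with
  | zero => simp [cocycle]
  | succ a ih =>
    rw [Nat.add_right_comm, cocycle, ih, cocycle, mul_assoc, Nat.cast_add, add_mul,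
      add_comm (a * α), add_assoc]

lemma cocycle_congr {n : ℕ} {x y : ℝ}
    (h : ∀ k < n, (Int.fract (x + k * α) < 1 - α ↔ Int.fract (y + k * α) < 1 - α)) :
    cocycle α pl pr n x = cocycle α pl pr n y := by
  induction n with
  | zero => rfl
  | succ n ih =>
    simp only [cocycle, stepPerm, h n n.lt_succ_self, ih fun k hk => h k (hk.trans n.lt_succ_self)]

lemma cocycle_mul_eq_pow {m Q : ℕ} {x : ℝ}
    (h : ∀ j < m, cocycle α pl pr Q (x + (j * Q : ℕ) * α) = cocycle α pl pr Q x) :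
    cocycle α pl pr (m * Q) x = cocycle α pl pr Q x ^ m := by
  induction m with
  | zero => simp [cocycle]
  | succ m ih =>
    rw [Nat.succ_mul, add_comm, cocycle_add, h m m.lt_succ_self,
      ih fun j hj => h j (hj.trans m.lt_succ_self),
      pow_succ']

def itineraryMismatch (m Q : ℕ) : Set ℝ :=
  ⋃ j ∈ Finset.range m, ⋃ k ∈ Finset.range Q,
    (fun x => Int.fract (x + k * α)) ⁻¹' crossing (1 - α) ((j * Q : ℕ) * α)

lemma sqT_iterate_factorial_mul {Q : ℕ} {x : ℝ} (hx : x ∈ Ico (0 : ℝ) 1)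
    (hxQ : x ∉ itineraryMismatch α d.factorial Q) (P : ℤ) (i : Fin d) :
    (sqT d α pl pr)^[d.factorial * Q] (x, i) =
      (Int.fract (x + d.factorial * (Q * α - P)), i) := by
  have hpow : ∀ σ : Equiv.Perm (Fin d), σ ^ d.factorial = 1 := fun σ => by
    simpa [Fintype.card_perm] using pow_card_eq_one (x := σ)
  have hrep : ∀ j < d.factorial, cocycle α pl pr Q (x + (j * Q : ℕ) * α) = cocycle α pl pr Q x :=
    fun j hj => cocycle_congr α pl pr fun k hk => not_not.mp fun hne => hxQ <|
      mem_biUnion (Finset.mem_range.mpr hj) <| mem_biUnion (Finset.mem_range.mpr hk) <| by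
        simpa only [crossing, mem_preimage, mem_ofPred_eq, Int.fract_fract_add, Int.fract_fract,
          add_right_comm x] using hne
  rw [sqT_iterate_of_mem_Ico α pl pr _ hx, cocycle_mul_eq_pow α pl pr hrep, hpow,
    show x + ((d.factorial * Q : ℕ) : ℝ) * α = x + d.factorial * (Q * α - P) + (d.factorial * P : ℤ)
      by push_cast; ring, Int.fract_add_intCast]
  rfl

end Cocycle

lemma volume_itineraryMismatch_le (α : ℝ) (m Q : ℕ) (P : ℤ) :
    volume.restrict (Ico (0 : ℝ) 1) (itineraryMismatch α m Q) ≤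
      ENNReal.ofReal (4 * m ^ 2 * (Q * |Q * α - P|)) := by
  have hpiece : ∀ j < m, ∀ k : ℕ, volume.restrict (Ico (0 : ℝ) 1)
      ((fun x => Int.fract (x + k * α)) ⁻¹' crossing (1 - α) ((j * Q : ℕ) * α)) ≤
        ENNReal.ofReal (4 * (m * |Q * α - P|)) := by
    intro j hj k
    rw [(measurePreserving_fract_add (k * α)).measure_preimage
      (measurableSet_crossing _ _).nullMeasurableSet]
    refine volume_crossing_le _ _ _ (j * P) ?_
    calc |((j * Q : ℕ) : ℝ) * α - ((j * P : ℤ) : ℝ)| = |(j : ℝ) * (Q * α - P)| := by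
          push_cast
          ring_nf
      _ ≤ m * |Q * α - P| := by
          rw [abs_mul, Nat.abs_cast]
          gcongr
  calc volume.restrict (Ico (0 : ℝ) 1) (itineraryMismatch α m Q)
      ≤ ∑ j ∈ Finset.range m, ∑ k ∈ Finset.range Q, volume.restrict (Ico (0 : ℝ) 1)
          ((fun x => Int.fract (x + k * α)) ⁻¹' crossing (1 - α) ((j * Q : ℕ) * α)) :=
        (measure_biUnion_finset_le _ _).trans
          (Finset.sum_le_sum fun j _ => measure_biUnion_finset_le _ _)
    _ ≤ ∑ j ∈ Finset.range m, ∑ k ∈ Finset.range Q, ENNReal.ofReal (4 * (m * |Q * α - P|)) :=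
        Finset.sum_le_sum fun j hj => Finset.sum_le_sum fun k _ =>
          hpiece j (Finset.mem_range.mp hj) k
    _ = ENNReal.ofReal (4 * m ^ 2 * (Q * |Q * α - P|)) := by
        simp only [Finset.sum_const, Finset.card_range, nsmul_eq_mul]
        rw [← ENNReal.ofReal_natCast m, ← ENNReal.ofReal_natCast Q, ← ENNReal.ofReal_mul
          (by positivity), ← ENNReal.ofReal_mul (by positivity)]
        ring_nf

theorem rigid_of_unbounded_partial_quotients_general
    (d : ℕ) (α : ℝ) (hirr : Irrational α) (h0 : 0 < α) (h1 : α < 1)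
    (pl pr : Equiv.Perm (Fin d))
    (hubpq : ¬ BoundedPQ α) :
    Rigid (muX d) (sqT d α pl pr) := by
  obtain ⟨Q, P, hQ, hQP⟩ := exists_seq_mul_abs_sub_tendsto_zero hirr h0 h1 hubpq
  have hP : Tendsto (fun n => (Q n : ℝ) * α - P n) atTop (𝓝 0) := by
    refine squeeze_zero_norm' ?_ hQP
    filter_upwards [hQ.eventually_ge_atTop 1] with n hn
    rw [Real.norm_eq_abs]
    exact le_mul_of_one_le_left (abs_nonneg _) (by exact_mod_cast hn)
  refine ⟨fun n => d.factorial * Q n,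
    tendsto_atTop_mono (fun n => Nat.le_mul_of_pos_left _ d.factorial_pos) hQ, fun A hA => ?_⟩
  refine tendsto_muX_preimage_symmDiff (t := fun n => d.factorial * (Q n * α - P n))
    (B := fun n => itineraryMismatch α d.factorial (Q n))
    (by simpa using hP.const_mul (d.factorial : ℝ)) ?_
    (fun n x hx hxB i => sqT_iterate_factorial_mul α pl pr hx hxB (P n) i) hA
  refine tendsto_of_tendsto_of_tendsto_of_le_of_le tendsto_const_nhds ?_ (fun _ => zero_le)
    fun n => volume_itineraryMismatch_le α _ (Q n) (P n)
  simpa only [mul_zero, ENNReal.ofReal_zero] using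
    ENNReal.tendsto_ofReal (hQP.const_mul (4 * (d.factorial : ℝ) ^ 2))

/-- Proposition: a square-tiled interval exchange transformation with `α` irrational of
unbounded partial quotients and `(p_l,p_r)` acting transitively (so `T` minimal) is rigid. -/
theorem rigid_of_unbounded_partial_quotients
    (d : ℕ) (hd : 1 ≤ d) (α : ℝ) (hirr : Irrational α) (h0 : 0 < α) (h1 : α < 1)
    (pl pr : Equiv.Perm (Fin d))
    (htrans : ∀ s : Set (Fin d), (∀ i ∈ s, pl i ∈ s) → (∀ i ∈ s, pr i ∈ s) →
      s = ∅ ∨ s = Set.univ)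
    (hubpq : ¬ BoundedPQ α) :
    Rigid (muX d) (sqT d α pl pr) :=
  rigid_of_unbounded_partial_quotients_general d α hirr h0 h1 pl pr hubpq
end

section
/- Let T be a square-tiled interval exchange transformation with α irrational. Then T is aperiodic: there is no point z ∈ X and integer n ≥ 1 with T^n(z) = z. Moreover, T is minimal — every T-orbit {T^n z : n ∈ ℤ} is dense in X — if and only if (p_l,p_r) acts transitively, i.e. there is no nonempty proper subset of {1,…,d} invariant under both p_l and p_r. -/
open Set

/-- The square-tiled interval exchange transformation `T = T_α` on
`X = [0,1) × {1,…,d}`, with `[0,1)` carrying the subspace topology of `ℝ` and `Fin d`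
the discrete topology: `T(x,i) = ({x+α}, p_l i)` if `x ∈ [0,1−α)` and
`T(x,i) = ({x+α}, p_r i)` if `x ∈ [1−α,1)`. -/
noncomputable def sqTsub (d : ℕ) (α : ℝ) (pl pr : Equiv.Perm (Fin d))
    (z : ↥(Set.Ico (0 : ℝ) 1) × Fin d) : ↥(Set.Ico (0 : ℝ) 1) × Fin d :=
  (⟨Int.fract ((z.1 : ℝ) + α), ⟨Int.fract_nonneg _, Int.fract_lt_one _⟩⟩,
    if (z.1 : ℝ) < 1 - α then pl z.2 else pr z.2)

open Filter Topology

/-!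
The first coordinate of `T^n (x, i)` is `{x + nα}`, so `T` has no periodic points. An invariant
set of levels traps every orbit, so minimality forces transitivity.

Conversely, let `O` be a nonempty `T`-invariant set and let `S y` be the set of levels `j` such
that points of `O` on level `j` accumulate at `y` from the right. On `[0, 1 - α)` and on
`[1 - α, 1)` the map `T` is a translation carrying levels by `p_l`, resp. `p_r`, so `S {y + α}`
is a permutation of `S y`. Since `S` is upper semicontinuous from the right and rotation orbits
are dense, all `S y` have the same size, and therefore `S` is locally constant from the right.
A jump of `S` from the left would propagate along a dense forward or backward rotation orbit,
contradicting constancy near `0`. So `S` is constant, `S 0` is invariant under `p_l` and `p_r`,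
and transitivity makes it everything: `O` is dense.
-/

theorem Int.fract_fract_add_s5 {R : Type*} [Ring R] [LinearOrder R] [IsStrictOrderedRing R]
    [FloorRing R] (a b : R) : Int.fract (Int.fract a + b) = Int.fract (a + b) :=
  Int.fract_eq_fract.2 ⟨-⌊a⌋, by rw [← Int.self_sub_floor]; push_cast; abel⟩

theorem Filter.map_add_right_nhdsGE {H : Type*} [TopologicalSpace H] [AddCommGroup H]
    [PartialOrder H] [IsOrderedAddMonoid H] [ContinuousAdd H] {c a : H} :
    map (· + c) (𝓝[≥] a) = 𝓝[≥] (a + c) := by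
  convert (Homeomorph.addRight c).isEmbedding.map_nhdsWithin_eq (Ici a) a using 2 <;> simp

theorem fract_add_nat_mul_notMem {β v : ℝ} {G : Set ℝ}
    (hstep : ∀ u ∈ Ioo (0 : ℝ) 1, Int.fract (u + β) ≠ 0 → u ∉ G → Int.fract (u + β) ∉ G)
    (hv : v ∈ Ioo 0 1) (hvG : v ∉ G) (hne : ∀ n : ℕ, Int.fract (v + n * β) ≠ 0) :
    ∀ n : ℕ, Int.fract (v + n * β) ∉ G
  | 0 => by simpa [Int.fract_eq_self.2 ⟨hv.1.le, hv.2⟩] using hvG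
  | n + 1 => by
    have hstep' := hstep _ ⟨(Int.fract_nonneg _).lt_of_ne (hne n).symm, Int.fract_lt_one _⟩
    rw [Int.fract_fract_add_s5, add_assoc, ← add_one_mul, ← Nat.cast_add_one] at hstep'
    exact hstep' (hne _) (fract_add_nat_mul_notMem hstep hv hvG hne n)

namespace Irrational

variable {α : ℝ}

theorem exists_fract_add_nat_mul_mem_Ioo (hα : Irrational α) (x : ℝ) {a b : ℝ} (ha : 0 ≤ a)
    (hab : a < b) (hb : b ≤ 1) : ∃ n : ℕ, Int.fract (x + n * α) ∈ Ioo a b := by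
  have : Fact ((0 : ℝ) < 1) := ⟨one_pos⟩
  have hmul : DenseRange fun n : ℕ => n • (α : AddCircle (1 : ℝ)) :=
    denseRange_zsmul_iff_nsmul.1 (AddCircle.denseRange_zsmul_coe_iff.2 (by rwa [div_one]))
  have hdense :
      DenseRange (((x : AddCircle (1 : ℝ)) + ·) ∘ fun n : ℕ => n • (α : AddCircle (1 : ℝ))) :=
    (add_left_surjective _).denseRange.comp hmul (continuous_const_add _)
  obtain ⟨n, t, ht, hnt⟩ := hdense.exists_mem_open
    (QuotientAddGroup.isOpenMap_coe _ isOpen_Ioo) ((nonempty_Ioo.2 hab).image _)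
  refine ⟨n, ?_⟩
  have hIco : t ∈ Ico (0 : ℝ) (0 + 1) := ⟨ha.trans ht.1.le, by linarith [ht.2]⟩
  rwa [← (AddCircle.coe_eq_coe_iff_of_mem_Ico hIco
    ⟨Int.fract_nonneg _, by simpa using Int.fract_lt_one _⟩).1
    (by rw [AddCircle.coe_fract, hnt]; simp)]

theorem frequently_fract_add_nat_mul (hα : Irrational α) (x : ℝ) {y : ℝ} (hy : y ∈ Ico 0 1) :
    ∃ᶠ t in 𝓝[≥] y, ∃ n : ℕ, Int.fract (x + n * α) = t := by
  refine (nhdsGE_basis_Ico y).frequently_iff.2 fun u hu => ?_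
  obtain ⟨n, hn⟩ := hα.exists_fract_add_nat_mul_mem_Ioo x hy.1 (lt_min hu hy.2) (min_le_right _ _)
  exact ⟨_, ⟨hn.1.le, hn.2.trans_le (min_le_left _ _)⟩, n, rfl⟩

theorem Ioo_subset_of_fract_add_mem_iff (hα : Irrational α) {G : Set ℝ} {ε : ℝ} (hε : 0 < ε)
    (hG : Ioo 0 ε ⊆ G)
    (hrot : ∀ u ∈ Ioo (0 : ℝ) 1, Int.fract (u + α) ≠ 0 → (Int.fract (u + α) ∈ G ↔ u ∈ G)) :
    Ioo 0 1 ⊆ G := by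
  intro v hv
  by_contra hvG
  suffices ∃ β, Irrational β ∧ ∀ n : ℕ, Int.fract (v + n * β) ∉ G by
    obtain ⟨β, hβ, hnot⟩ := this
    obtain ⟨n, hn⟩ := hβ.exists_fract_add_nat_mul_mem_Ioo v le_rfl (lt_min hε one_pos)
      (min_le_right _ _)
    exact hnot n (hG ⟨hn.1, hn.2.trans_le (min_le_left _ _)⟩)
  by_cases hfwd : ∀ n : ℕ, Int.fract (v + n * α) ≠ 0
  · exact ⟨α, hα, fract_add_nat_mul_notMem (fun u hu h0 => (hrot u hu h0).not.2) hv hvG hfwd⟩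
  obtain ⟨N, hN⟩ : ∃ N : ℕ, Int.fract (v + N * α) = 0 := by simpa using hfwd
  -- the orbit meets `0` at most once, so the backward orbit avoids it
  refine ⟨-α, hα.neg, fract_add_nat_mul_notMem (fun u hu h0 huG hwG => ?_) hv hvG fun n hn => ?_⟩
  · have hw : Int.fract (u + -α) ∈ Ioo 0 1 :=
      ⟨(Int.fract_nonneg _).lt_of_ne h0.symm, Int.fract_lt_one _⟩
    have hwu : Int.fract (Int.fract (u + -α) + α) = u := by
      rw [Int.fract_fract_add_s5, neg_add_cancel_right, Int.fract_eq_self.2 ⟨hu.1.le, hu.2⟩]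
    have hrot' := hrot _ hw (by rw [hwu]; exact hu.1.ne')
    rw [hwu] at hrot'
    exact huG (hrot'.2 hwG)
  · obtain ⟨m, hm⟩ := Int.fract_eq_fract.1 (hN.trans hn.symm)
    have hNn : N + n ≠ 0 := by
      rintro h
      obtain rfl : N = 0 := by omega
      simp [Int.fract_eq_self.2 ⟨hv.1.le, hv.2⟩, hv.1.ne'] at hN
    exact (hα.natCast_mul hNn).ne_int m (by push_cast; linarith)

end Irrational

section RightLevels

variable {ι : Type*}

/-- With `E = levelSet O`, this is the set `S y` of the proof sketch. -/
def rightLevels (E : ι → Set ℝ) (y : ℝ) : Set ι := {j | ∃ᶠ x in 𝓝[≥] y, x ∈ E j}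

theorem rightLevels_add {E : ι → Set ℝ} {a b c y : ℝ} (τ : Equiv.Perm ι)
    (hE : ∀ j, ∀ x ∈ Ico a b, x + c ∈ E (τ j) ↔ x ∈ E j) (hy : y ∈ Ico a b) :
    rightLevels E (y + c) = τ '' rightLevels E y := by
  ext j
  obtain ⟨i, rfl⟩ := τ.surjective j
  rw [τ.injective.mem_set_image]
  simp only [rightLevels, mem_ofPred_eq, ← map_add_right_nhdsGE, frequently_map]
  exact frequently_congr (eventually_of_mem (Ico_mem_nhdsGE hy.2) fun x hx =>
    hE i x ⟨hy.1.trans hx.1, hx.2⟩)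

theorem eventually_rightLevels_subset [Finite ι] (E : ι → Set ℝ) (y : ℝ) :
    ∀ᶠ y' in 𝓝[≥] y, rightLevels E y' ⊆ rightLevels E y := by
  suffices ∀ j, ∀ᶠ y' in 𝓝[≥] y, j ∈ rightLevels E y' → j ∈ rightLevels E y from
    (eventually_all.2 this).mono fun _ h j => h j
  intro j
  by_cases hj : j ∈ rightLevels E y
  · exact .of_forall fun _ _ => hj
  rw [rightLevels, mem_ofPred_eq, not_frequently] at hj
  filter_upwards [eventually_eventually_nhdsWithin.2 hj, self_mem_nhdsWithin] with y' h hy' hj'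
  exact absurd hj' (not_frequently.2 (nhdsWithin_mono _ (Ici_subset_Ici.2 hy') h))

end RightLevels

theorem eventually_nhdsLT_eq_add_iff {β : Type*} {f : ℝ → β} {g : β → β} (hg : g.Injective)
    {c u : ℝ} (h : ∀ᶠ x in 𝓝 u, f (x + c) = g (f x)) :
    (∀ᶠ x in 𝓝[<] (u + c), f x = f (u + c)) ↔ ∀ᶠ x in 𝓝[<] u, f x = f u := by
  rw [← map_add_right_nhdsLT, eventually_map, h.self_of_nhds]
  exact eventually_congr ((h.filter_mono nhdsWithin_le_nhds).mono fun x hx => by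
    rw [hx, hg.eq_iff])

section OrbitSet

variable {X : Type*} {f : X → X} {z w : X}

/-- For bijective `f`, this is the `ℤ`-orbit of `z`. -/
def orbitSet (f : X → X) (z : X) : Set X := {w | ∃ n : ℕ, f^[n] z = w ∨ f^[n] w = z}

theorem mem_orbitSet_self (f : X → X) (z : X) : z ∈ orbitSet f z := ⟨0, .inl rfl⟩

theorem preimage_orbitSet (hf : f.Injective) : f ⁻¹' orbitSet f z = orbitSet f z := by
  ext w
  constructor
  · rintro ⟨n, h | h⟩
    · cases n with
      | zero => exact ⟨1, .inr h.symm⟩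
      | succ n => exact ⟨n, .inl (hf (by rwa [← Function.iterate_succ_apply' f]))⟩
    · exact ⟨n + 1, .inr h⟩
  · rintro ⟨n, h | h⟩
    · exact ⟨n + 1, .inl (by rw [Function.iterate_succ_apply', h])⟩
    · cases n with
      | zero => exact ⟨1, .inl (by simp [← h])⟩
      | succ n => exact ⟨n, .inr h⟩

theorem apply_iff_of_mem_orbitSet {P : X → Prop} (hP : ∀ w, P (f w) ↔ P w)
    (hw : w ∈ orbitSet f z) : P w ↔ P z := by
  have key : ∀ n w, P (f^[n] w) ↔ P w := fun n => by
    induction n with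
    | zero => exact fun _ => Iff.rfl
    | succ n ih => exact fun w => (ih (f w)).trans (hP w)
  obtain ⟨n, rfl | rfl⟩ := hw
  exacts [key n z, (key n w).symm]

end OrbitSet

section SquareTiled

variable {d : ℕ} {α : ℝ} {pl pr : Equiv.Perm (Fin d)}

theorem sqTsub_fst (w : ↥(Ico (0 : ℝ) 1) × Fin d) :
    ((sqTsub d α pl pr w).1 : ℝ) = Int.fract ((w.1 : ℝ) + α) :=
  rfl

theorem sqTsub_iterate_fst (z : ↥(Ico (0 : ℝ) 1) × Fin d) (n : ℕ) :
    (((sqTsub d α pl pr)^[n] z).1 : ℝ) = Int.fract ((z.1 : ℝ) + n * α) := by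
  induction n with
  | zero => simpa using (Int.fract_eq_self.2 z.1.2).symm
  | succ n ih =>
    rw [Function.iterate_succ_apply', sqTsub_fst, ih, Int.fract_fract_add_s5]
    push_cast
    ring_nf

theorem sqTsub_iterate_ne_self (hα : Irrational α) (z : ↥(Ico (0 : ℝ) 1) × Fin d) {n : ℕ}
    (hn : n ≠ 0) : (sqTsub d α pl pr)^[n] z ≠ z := by
  intro h
  have hfst := congrArg (fun w => (w.1 : ℝ)) h
  simp only [sqTsub_iterate_fst] at hfst
  obtain ⟨m, hm⟩ := Int.fract_eq_fract.1 (hfst.trans (Int.fract_eq_self.2 z.1.2).symm)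
  exact (hα.natCast_mul hn).ne_int m (by linarith)

theorem sqTsub_injective : (sqTsub d α pl pr).Injective := by
  rintro ⟨x, i⟩ ⟨x', i'⟩ h
  simp only [sqTsub, Prod.mk.injEq] at h
  obtain ⟨hx, hi⟩ := h
  obtain rfl : x = x' := by
    obtain ⟨m, hm⟩ := Int.fract_eq_fract.1 (congrArg Subtype.val hx)
    have hfract : Int.fract (x : ℝ) = Int.fract (x' : ℝ) := Int.fract_eq_fract.2 ⟨m, by linarith⟩
    rwa [Int.fract_eq_self.2 x.2, Int.fract_eq_self.2 x'.2, Subtype.val_inj] at hfract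
  split_ifs at hi <;> simp_all

theorem sqTsub_mk_of_add_mem {x : ℝ} (hx : x ∈ Ico 0 1) (hx' : x + α ∈ Ico 0 1) (i : Fin d) :
    sqTsub d α pl pr (⟨x, hx⟩, i) = (⟨x + α, hx'⟩, pl i) := by
  simp [sqTsub, Int.fract_eq_self.2 hx', show x < 1 - α by linarith [hx'.2]]

theorem sqTsub_mk_of_add_sub_one_mem {x : ℝ} (hx : x ∈ Ico 0 1) (hx' : x + α - 1 ∈ Ico 0 1)
    (i : Fin d) : sqTsub d α pl pr (⟨x, hx⟩, i) = (⟨x + α - 1, hx'⟩, pr i) := by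
  have hfract : Int.fract (x + α) = x + α - 1 :=
    Int.fract_eq_iff.2 ⟨hx'.1, hx'.2, 1, by push_cast; ring⟩
  simp [sqTsub, hfract, show ¬ x < 1 - α by linarith [hx'.1]]

end SquareTiled

section InvariantSet

variable {d : ℕ} {α : ℝ} {pl pr : Equiv.Perm (Fin d)} {O : Set (↥(Ico (0 : ℝ) 1) × Fin d)}

def levelSet (O : Set (↥(Ico (0 : ℝ) 1) × Fin d)) (j : Fin d) : Set ℝ :=
  Subtype.val '' {x | (x, j) ∈ O}

theorem mem_levelSet {x : ℝ} (hx : x ∈ Ico 0 1) {j : Fin d} :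
    x ∈ levelSet O j ↔ (⟨x, hx⟩, j) ∈ O :=
  ⟨by rintro ⟨x', h, rfl⟩; exact h, fun h => ⟨_, h, rfl⟩⟩

theorem mem_closure_of_mem_rightLevels {y : ↥(Ico (0 : ℝ) 1)} {j : Fin d}
    (h : j ∈ rightLevels (levelSet O) y) : (y, j) ∈ closure O :=
  map_mem_closure (f := fun x => (x, j)) (continuous_id.prodMk continuous_const)
    (closure_subtype.2 (mem_closure_iff_frequently.2 (h.filter_mono nhdsWithin_le_nhds)))
    fun _ hx => hx

theorem rightLevels_levelSet_add (hO : sqTsub d α pl pr ⁻¹' O = O) (h0 : 0 ≤ α)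
    {y : ℝ} (hy : y ∈ Ico 0 (1 - α)) :
    rightLevels (levelSet O) (y + α) = pl '' rightLevels (levelSet O) y := by
  refine rightLevels_add pl (fun j x hx => ?_) hy
  have hx₁ : x ∈ Ico 0 1 := ⟨hx.1, by linarith [hx.2]⟩
  have hx₂ : x + α ∈ Ico 0 1 := ⟨by linarith [hx.1], by linarith [hx.2]⟩
  rw [mem_levelSet hx₁, mem_levelSet hx₂, ← sqTsub_mk_of_add_mem (pr := pr) hx₁ hx₂,
    ← mem_preimage, hO]

theorem rightLevels_levelSet_add_sub_one (hO : sqTsub d α pl pr ⁻¹' O = O)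
    (h1 : α ≤ 1) {y : ℝ} (hy : y ∈ Ico (1 - α) 1) :
    rightLevels (levelSet O) (y + (α - 1)) = pr '' rightLevels (levelSet O) y := by
  refine rightLevels_add pr (fun j x hx => ?_) hy
  have hx₁ : x ∈ Ico 0 1 := ⟨by linarith [hx.1], hx.2⟩
  have hx₂ : x + α - 1 ∈ Ico 0 1 := ⟨by linarith [hx.1], by linarith [hx.2]⟩
  rw [← add_sub_assoc, mem_levelSet hx₁, mem_levelSet hx₂,
    ← sqTsub_mk_of_add_sub_one_mem (pl := pl) hx₁ hx₂, ← mem_preimage, hO]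

theorem ncard_rightLevels_fract_add (hO : sqTsub d α pl pr ⁻¹' O = O) (h0 : 0 ≤ α)
    (h1 : α ≤ 1) {y : ℝ} (hy : y ∈ Ico 0 1) :
    (rightLevels (levelSet O) (Int.fract (y + α))).ncard = (rightLevels (levelSet O) y).ncard := by
  rcases lt_or_ge y (1 - α) with h | h
  · rw [Int.fract_eq_self.2 ⟨by linarith [hy.1], by linarith⟩,
      rightLevels_levelSet_add hO h0 ⟨hy.1, h⟩, ncard_image_of_injective _ pl.injective]
  · rw [show Int.fract (y + α) = y + (α - 1) from
        Int.fract_eq_iff.2 ⟨by linarith, by linarith [hy.2], 1, by push_cast; ring⟩,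
      rightLevels_levelSet_add_sub_one hO h1 ⟨h, hy.2⟩, ncard_image_of_injective _ pr.injective]

theorem ncard_rightLevels_fract_add_nat_mul (hO : sqTsub d α pl pr ⁻¹' O = O)
    (h0 : 0 ≤ α) (h1 : α ≤ 1) {y : ℝ} (hy : y ∈ Ico 0 1) (n : ℕ) :
    (rightLevels (levelSet O) (Int.fract (y + n * α))).ncard =
      (rightLevels (levelSet O) y).ncard := by
  induction n with
  | zero => simp [Int.fract_eq_self.2 hy]
  | succ n ih =>
    rw [Nat.cast_succ, add_one_mul, ← add_assoc, ← Int.fract_fract_add_s5,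
      ncard_rightLevels_fract_add hO h0 h1 ⟨Int.fract_nonneg _, Int.fract_lt_one _⟩, ih]

theorem rightLevels_nonempty (hO : sqTsub d α pl pr ⁻¹' O = O) (hα : Irrational α)
    {z : ↥(Ico (0 : ℝ) 1) × Fin d} (hz : z ∈ O) {y : ℝ} (hy : y ∈ Ico 0 1) :
    (rightLevels (levelSet O) y).Nonempty := by
  refine frequently_exists.1 ((hα.frequently_fract_add_nat_mul (z.1 : ℝ) hy).mono ?_)
  rintro _ ⟨n, rfl⟩
  exact ⟨((sqTsub d α pl pr)^[n] z).2, ((sqTsub d α pl pr)^[n] z).1,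
    MapsTo.iterate (fun w hw => by rwa [← hO] at hw) n hz, sqTsub_iterate_fst z n⟩

theorem ncard_rightLevels_le (hO : sqTsub d α pl pr ⁻¹' O = O) (hα : Irrational α)
    (h0 : 0 ≤ α) (h1 : α ≤ 1) {y y' : ℝ} (hy : y ∈ Ico 0 1) (hy' : y' ∈ Ico 0 1) :
    (rightLevels (levelSet O) y).ncard ≤ (rightLevels (levelSet O) y').ncard := by
  obtain ⟨_, ⟨n, rfl⟩, hsub⟩ := ((hα.frequently_fract_add_nat_mul y hy').and_eventually
    (eventually_rightLevels_subset (levelSet O) y')).exists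
  rw [← ncard_rightLevels_fract_add_nat_mul hO h0 h1 hy n]
  exact ncard_le_ncard hsub (toFinite _)

theorem eventually_rightLevels_eq (hO : sqTsub d α pl pr ⁻¹' O = O)
    (hα : Irrational α) (h0 : 0 ≤ α) (h1 : α ≤ 1) {y : ℝ} (hy : y ∈ Ico 0 1) :
    ∀ᶠ y' in 𝓝[≥] y, rightLevels (levelSet O) y' = rightLevels (levelSet O) y := by
  filter_upwards [eventually_rightLevels_subset (levelSet O) y, Ico_mem_nhdsGE hy.2]
    with y' hsub hy'
  exact eq_of_subset_of_ncard_le hsub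
    (ncard_rightLevels_le hO hα h0 h1 hy ⟨hy.1.trans hy'.1, hy'.2⟩)

theorem eventually_nhdsLT_rightLevels_eq (hO : sqTsub d α pl pr ⁻¹' O = O)
    (hα : Irrational α) (h0 : 0 ≤ α) (h1 : α ≤ 1) {v : ℝ} (hv : v ∈ Ioo 0 1) :
    ∀ᶠ w in 𝓝[<] v, rightLevels (levelSet O) w = rightLevels (levelSet O) v := by
  obtain ⟨ε, hε, hsub⟩ := mem_nhdsGE_iff_exists_Ico_subset.1
    (eventually_rightLevels_eq hO hα h0 h1 (y := 0) ⟨le_rfl, one_pos⟩)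
  refine hα.Ioo_subset_of_fract_add_mem_iff
    (G := {v | ∀ᶠ w in 𝓝[<] v, rightLevels (levelSet O) w = rightLevels (levelSet O) v})
    hε (fun v hv => ?_) (fun u hu hne => ?_) hv
  · filter_upwards [Ioo_mem_nhdsLT hv.1] with w hw
    exact (hsub ⟨hw.1.le, hw.2.trans hv.2⟩).trans (hsub ⟨hv.1.le, hv.2⟩).symm
  rcases lt_trichotomy u (1 - α) with h | rfl | h
  · rw [Int.fract_eq_self.2 ⟨by linarith [hu.1], by linarith⟩]
    exact eventually_nhdsLT_eq_add_iff (image_injective.2 pl.injective)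
      (eventually_of_mem (Ioo_mem_nhds hu.1 h) fun x hx =>
        rightLevels_levelSet_add hO h0 ⟨hx.1.le, hx.2⟩)
  · simp at hne
  · rw [show Int.fract (u + α) = u + (α - 1) from
        Int.fract_eq_iff.2 ⟨by linarith, by linarith [hu.2], 1, by push_cast; ring⟩]
    exact eventually_nhdsLT_eq_add_iff (image_injective.2 pr.injective)
      (eventually_of_mem (Ioo_mem_nhds h hu.2) fun x hx =>
        rightLevels_levelSet_add_sub_one hO h1 ⟨hx.1.le, hx.2⟩)

theorem rightLevels_eq_rightLevels_zero (hO : sqTsub d α pl pr ⁻¹' O = O)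
    (hα : Irrational α) (h0 : 0 ≤ α) (h1 : α ≤ 1) {y : ℝ} (hy : y ∈ Ico 0 1) :
    rightLevels (levelSet O) y = rightLevels (levelSet O) 0 := by
  refine isPreconnected_Ico.induction₂
    (fun a b => rightLevels (levelSet O) a = rightLevels (levelSet O) b) (fun x hx => ?_)
    (fun _ _ _ _ _ _ => Eq.trans) (fun _ _ _ _ => Eq.symm) hy ⟨le_rfl, one_pos⟩
  rcases hx.1.eq_or_lt with rfl | hx₀
  · exact ((eventually_rightLevels_eq hO hα h0 h1 hx).filter_mono
      (nhdsWithin_mono _ Ico_subset_Ici_self)).mono fun _ h => h.symm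
  refine Eventually.filter_mono nhdsWithin_le_nhds ?_
  rw [← nhdsLT_sup_nhdsGE]
  exact eventually_sup.2 ⟨(eventually_nhdsLT_rightLevels_eq hO hα h0 h1 ⟨hx₀, hx.2⟩).mono
    fun _ h => h.symm, (eventually_rightLevels_eq hO hα h0 h1 hx).mono fun _ h => h.symm⟩

theorem rightLevels_eq_univ (hO : sqTsub d α pl pr ⁻¹' O = O) (hα : Irrational α)
    (h0 : 0 < α) (h1 : α < 1)
    (htrans : ∀ s : Set (Fin d), (∀ i ∈ s, pl i ∈ s) → (∀ i ∈ s, pr i ∈ s) → s = ∅ ∨ s = univ)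
    {z : ↥(Ico (0 : ℝ) 1) × Fin d} (hz : z ∈ O) {y : ℝ} (hy : y ∈ Ico 0 1) :
    rightLevels (levelSet O) y = univ := by
  have hconst {y : ℝ} (hy : y ∈ Ico 0 1) := rightLevels_eq_rightLevels_zero hO hα h0.le h1.le hy
  have hl : pl '' rightLevels (levelSet O) 0 = rightLevels (levelSet O) 0 := by
    rw [← rightLevels_levelSet_add hO h0.le ⟨le_rfl, sub_pos.2 h1⟩, zero_add, hconst ⟨h0.le, h1⟩]
  have hr : pr '' rightLevels (levelSet O) 0 = rightLevels (levelSet O) 0 :=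
    calc pr '' rightLevels (levelSet O) 0
        = pr '' rightLevels (levelSet O) (1 - α) := by
          rw [hconst (y := 1 - α) ⟨by linarith, by linarith⟩]
      _ = rightLevels (levelSet O) (1 - α + (α - 1)) :=
        (rightLevels_levelSet_add_sub_one hO h1.le ⟨le_rfl, by linarith⟩).symm
      _ = rightLevels (levelSet O) 0 := by rw [show 1 - α + (α - 1) = 0 by ring]
  rcases htrans _ (fun i hi => hl ▸ mem_image_of_mem pl hi)
    (fun i hi => hr ▸ mem_image_of_mem pr hi) with h | h
  · exact absurd h (rightLevels_nonempty hO hα hz ⟨le_rfl, one_pos⟩).ne_empty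
  · rw [hconst hy, h]

theorem dense_of_preimage_eq (hO : sqTsub d α pl pr ⁻¹' O = O) (hα : Irrational α)
    (h0 : 0 < α) (h1 : α < 1)
    (htrans : ∀ s : Set (Fin d), (∀ i ∈ s, pl i ∈ s) → (∀ i ∈ s, pr i ∈ s) → s = ∅ ∨ s = univ)
    {z : ↥(Ico (0 : ℝ) 1) × Fin d} (hz : z ∈ O) : Dense O := fun w =>
  mem_closure_of_mem_rightLevels (by
    rw [rightLevels_eq_univ hO hα h0 h1 htrans hz w.1.2]; trivial)

end InvariantSet

theorem Equiv.Perm.apply_mem_iff_of_mapsTo {X : Type*} [Finite X] (σ : Equiv.Perm X)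
    {s : Set X} (hs : ∀ i ∈ s, σ i ∈ s) (i : X) : σ i ∈ s ↔ i ∈ s :=
  ⟨fun h => by simpa using σ.perm_symm_mapsTo_of_mapsTo hs h, hs i⟩

section Transitivity

variable {d : ℕ} {α : ℝ} {pl pr : Equiv.Perm (Fin d)}

theorem sqTsub_snd_mem_iff {s : Set (Fin d)} (hl : ∀ i ∈ s, pl i ∈ s) (hr : ∀ i ∈ s, pr i ∈ s)
    (w : ↥(Ico (0 : ℝ) 1) × Fin d) : (sqTsub d α pl pr w).2 ∈ s ↔ w.2 ∈ s := by
  simp only [sqTsub]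
  split_ifs
  exacts [pl.apply_mem_iff_of_mapsTo hl _, pr.apply_mem_iff_of_mapsTo hr _]

theorem eq_empty_or_univ_of_dense_orbitSet
    (hmin : ∀ z, Dense (orbitSet (sqTsub d α pl pr) z)) {s : Set (Fin d)}
    (hl : ∀ i ∈ s, pl i ∈ s) (hr : ∀ i ∈ s, pr i ∈ s) : s = ∅ ∨ s = univ := by
  refine or_iff_not_imp_left.2 fun hs => eq_univ_of_forall fun j => ?_
  obtain ⟨i, hi⟩ := nonempty_iff_ne_empty.2 hs
  let x : ↥(Ico (0 : ℝ) 1) := ⟨0, le_rfl, one_pos⟩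
  obtain ⟨w, hw, rfl⟩ := (hmin (x, i)).exists_mem_open
    ((isOpen_discrete {j}).preimage continuous_snd) ⟨(x, j), rfl⟩
  exact (apply_iff_of_mem_orbitSet (P := fun w => w.2 ∈ s) (sqTsub_snd_mem_iff hl hr) hw).2 hi

end Transitivity

theorem aperiodic_and_minimal_iff_transitive_general
    (d : ℕ) (α : ℝ) (hirr : Irrational α) (h0 : 0 < α) (h1 : α < 1)
    (pl pr : Equiv.Perm (Fin d)) :
    (∀ z : ↥(Set.Ico (0 : ℝ) 1) × Fin d, ∀ n : ℕ, 1 ≤ n →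
        (sqTsub d α pl pr)^[n] z ≠ z) ∧
    ((∀ z : ↥(Set.Ico (0 : ℝ) 1) × Fin d,
        Dense {w : ↥(Set.Ico (0 : ℝ) 1) × Fin d |
          ∃ n : ℕ, (sqTsub d α pl pr)^[n] z = w ∨ (sqTsub d α pl pr)^[n] w = z}) ↔
      (∀ s : Set (Fin d), (∀ i ∈ s, pl i ∈ s) → (∀ i ∈ s, pr i ∈ s) →
        s = ∅ ∨ s = Set.univ)) :=
  ⟨fun z _ hn => sqTsub_iterate_ne_self hirr z (by omega),
    fun hmin _ hl hr => eq_empty_or_univ_of_dense_orbitSet hmin hl hr,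
    fun htrans z => dense_of_preimage_eq (preimage_orbitSet sqTsub_injective) hirr h0 h1 htrans
      (mem_orbitSet_self _ z)⟩

/-- Proposition: a square-tiled interval exchange transformation with `α` irrational is
aperiodic, and it is minimal (every `T`-orbit `{T^n z : n ∈ ℤ}` is dense — since `T` is
bijective, `w` lies in the `ℤ`-orbit of `z` iff `T^n z = w` or `T^n w = z` for some
`n ∈ ℕ`) if and only if no nonempty proper subset of `{1,…,d}` is invariant under both
`p_l` and `p_r`. -/
theorem aperiodic_and_minimal_iff_transitive
    (d : ℕ) (hd : 1 ≤ d) (α : ℝ) (hirr : Irrational α) (h0 : 0 < α) (h1 : α < 1)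
    (pl pr : Equiv.Perm (Fin d)) :
    (∀ z : ↥(Set.Ico (0 : ℝ) 1) × Fin d, ∀ n : ℕ, 1 ≤ n →
        (sqTsub d α pl pr)^[n] z ≠ z) ∧
    ((∀ z : ↥(Set.Ico (0 : ℝ) 1) × Fin d,
        Dense {w : ↥(Set.Ico (0 : ℝ) 1) × Fin d |
          ∃ n : ℕ, (sqTsub d α pl pr)^[n] z = w ∨ (sqTsub d α pl pr)^[n] w = z}) ↔
      (∀ s : Set (Fin d), (∀ i ∈ s, pl i ∈ s) → (∀ i ∈ s, pr i ∈ s) →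
        s = ∅ ∨ s = Set.univ)) :=
  aperiodic_and_minimal_iff_transitive_general d α hirr h0 h1 pl pr
end

section
/- The words w_n, n ≥ 1, defined by the recursion are exactly the nonempty bispecial words of the Sturmian language L(R); for each n, w_{n+1} is the shortest bispecial word having w_n as a proper prefix; and for each n the set of return words of w_n is exactly {M_n, P_n}. -/
open Set

/-- The rotation `R : x ↦ {x+α}` of `[0,1)`. -/
noncomputable def rotR (α : ℝ) (x : ℝ) : ℝ := Int.fract (x + α)

/-- Coding of a point of `[0,1)` over the alphabet `{l, r}` (modelled as `Bool`, with
`l = false`, `r = true`): letter `l` on `[0,1−α)` and `r` on `[1−α,1)`. -/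
noncomputable def codeR (α : ℝ) (x : ℝ) : Bool :=
  if Int.fract x < 1 - α then false else true

/-- The Sturmian language `L(R)`: all finite words occurring in codings of `R`-orbits. -/
noncomputable def LangR (α : ℝ) : Set (List Bool) :=
  {w | ∃ x ∈ Set.Ico (0 : ℝ) 1, ∃ k : ℕ,
    w = (List.range w.length).map fun j => codeR α ((rotR α)^[k + j] x)}

/-- The data `(l_n, r_n, w_n, M_n, P_n)` of the recursion. -/
structure SDI where
  l : ℝ
  r : ℝ
  w : List Bool
  M : List Bool
  P : List Bool

/-- One step of the recursion: if `l_n > r_n` then `l_{n+1} = l_n − r_n`, `r_{n+1} = r_n`,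
`w_{n+1} = w_n P_n`, `P_{n+1} = P_n`, `M_{n+1} = M_n P_n`; if `r_n > l_n` then
`l_{n+1} = l_n`, `r_{n+1} = r_n − l_n`, `w_{n+1} = w_n M_n`, `P_{n+1} = P_n M_n`,
`M_{n+1} = M_n` (for irrational `α` the case `l_n = r_n` never occurs). -/
noncomputable def SDI.step (t : SDI) : SDI :=
  if t.r < t.l then ⟨t.l - t.r, t.r, t.w ++ t.P, t.M ++ t.P, t.P⟩
  else ⟨t.l, t.r - t.l, t.w ++ t.M, t.M, t.P ++ t.M⟩

/-- `sdi α n` is the data `(l_n, r_n, w_n, M_n, P_n)` (meaningful for `n ≥ 1`), starting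
from `l_1 = α`, `r_1 = 1 − 2α`, `w_1 = l`, `M_1 = l`, `P_1 = rl`. -/
noncomputable def sdi (α : ℝ) (n : ℕ) : SDI :=
  SDI.step^[n - 1] ⟨α, 1 - 2 * α, [false], [false], [true, false]⟩

/-- `w` is right special in `L(R)`: both `wl` and `wr` belong to `L(R)`. -/
def RightSpecial (α : ℝ) (w : List Bool) : Prop :=
  w ++ [false] ∈ LangR α ∧ w ++ [true] ∈ LangR α

/-- `w` is left special in `L(R)`: both `lw` and `rw` belong to `L(R)`. -/
def LeftSpecial (α : ℝ) (w : List Bool) : Prop :=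
  false :: w ∈ LangR α ∧ true :: w ∈ LangR α

/-- `w` is bispecial: both right special and left special. -/
def Bispecial (α : ℝ) (w : List Bool) : Prop :=
  RightSpecial α w ∧ LeftSpecial α w

/-- `Z` is a return word of `w` (in `L(R)`): `wZ ∈ L(R)` and `w` occurs exactly twice in
`wZ`, once as a prefix (position `0`) and once as a suffix (position `|Z|`). -/
def IsReturnWord (α : ℝ) (w Z : List Bool) : Prop :=
  w ++ Z ∈ LangR α ∧ Z ≠ [] ∧
    {i : ℕ | w <+: (w ++ Z).drop i} = {0, Z.length}

/- ### fract helpers -/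

lemma fract_shift (x y : ℝ) : Int.fract (Int.fract x + y) = Int.fract (x + y) := by
  have : Int.fract x + y = (x + y) - (⌊x⌋ : ℝ) := by rw [Int.fract]; ring
  rw [this, Int.fract_sub_intCast]

lemma fract_shift' (x y : ℝ) : Int.fract (x + Int.fract y) = Int.fract (x + y) := by
  rw [add_comm, fract_shift, add_comm]

lemma fract_self_of (x : ℝ) (h0 : 0 ≤ x) (h1 : x < 1) : Int.fract x = x :=
  Int.fract_eq_self.mpr ⟨h0, h1⟩

lemma fract_of_one_le (x : ℝ) (h0 : 1 ≤ x) (h1 : x < 2) : Int.fract x = x - 1 := by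
  have := Int.fract_sub_intCast x 1
  push_cast at this
  rw [← this]; exact fract_self_of _ (by linarith) (by linarith)

lemma fract_neg_self (x : ℝ) : Int.fract (-x) = Int.fract (-Int.fract x) := by
  have : -Int.fract x = -x + (⌊x⌋ : ℝ) := by rw [Int.fract]; ring
  rw [this, Int.fract_add_intCast]

/- ### Code -/

noncomputable def Code (α y : ℝ) (m : ℕ) : List Bool :=
  (List.range m).map fun j : ℕ => codeR α (y + (j : ℝ) * α)

lemma codeR_fract (α x : ℝ) : codeR α (Int.fract x) = codeR α x := by
  unfold codeR; rw [Int.fract_fract]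

lemma Code_length (α y : ℝ) (m : ℕ) : (Code α y m).length = m := by
  simp [Code]

lemma Code_fract (α y : ℝ) (m : ℕ) : Code α (Int.fract y) m = Code α y m := by
  unfold Code
  refine List.map_congr_left fun j _ => ?_
  rw [← codeR_fract α (Int.fract y + _), fract_shift, codeR_fract]

lemma Code_add (α y : ℝ) (s t : ℕ) :
    Code α y (s + t) = Code α y s ++ Code α (y + s * α) t := by
  unfold Code
  rw [List.range_add, List.map_append, List.map_map]
  congr 1
  refine List.map_congr_left fun j _ => ?_
  simp only [Function.comp_apply]
  congr 1
  push_cast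
  ring

lemma Code_one (α y : ℝ) : Code α y 1 = [codeR α y] := by
  show List.map _ (List.range 1) = _
  rw [List.range_succ]
  simp [Code]

lemma Code_take {α y : ℝ} {s m : ℕ} (h : s ≤ m) :
    (Code α y m).take s = Code α y s := by
  obtain ⟨t, rfl⟩ := Nat.le.dest h
  rw [Code_add, List.take_left' (Code_length _ _ _)]

lemma Code_cancel {α y : ℝ} {s t : ℕ} {u v : List Bool} (hu : u.length = s)
    (h : Code α y (s + t) = u ++ v) : Code α y s = u ∧ Code α (y + s * α) t = v := by
  rw [Code_add] at h
  exact List.append_inj h (by rw [Code_length, hu])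

/- ### LangR characterization -/

lemma rot_iter (α : ℝ) (x : ℝ) (hx0 : 0 ≤ x) (hx1 : x < 1) (n : ℕ) :
    (rotR α)^[n] x = Int.fract (x + n * α) := by
  induction n with
  | zero => simp [fract_self_of x hx0 hx1]
  | succ n ih =>
    rw [Function.iterate_succ_apply', ih, rotR, fract_shift]
    congr 1
    push_cast
    ring

lemma mem_LangR_iff (α : ℝ) (w : List Bool) :
    w ∈ LangR α ↔ ∃ y, 0 ≤ y ∧ y < 1 ∧ w = Code α y w.length := by
  constructor
  · rintro ⟨x, ⟨hx0, hx1⟩, k, hw⟩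
    refine ⟨Int.fract (x + k * α), Int.fract_nonneg _, Int.fract_lt_one _, ?_⟩
    rw [Code_fract]
    conv_lhs => rw [hw]
    unfold Code
    refine List.map_congr_left fun j hj => ?_
    rw [rot_iter α x hx0 hx1, codeR_fract]
    have : x + ((k + j : ℕ) : ℝ) * α = x + (k : ℝ) * α + (j : ℝ) * α := by push_cast; ring
    rw [this]
  · rintro ⟨y, hy0, hy1, hw⟩
    refine ⟨y, ⟨hy0, hy1⟩, 0, ?_⟩
    conv_lhs => rw [hw]
    unfold Code
    refine List.map_congr_left fun j hj => ?_
    rw [rot_iter α y hy0 hy1, codeR_fract]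
    norm_num

lemma LangR_prefix {α : ℝ} {u w : List Bool} (h : u <+: w) (hw : w ∈ LangR α) :
    u ∈ LangR α := by
  rw [mem_LangR_iff] at hw ⊢
  obtain ⟨y, hy0, hy1, hwc⟩ := hw
  refine ⟨y, hy0, hy1, ?_⟩
  obtain ⟨t, rfl⟩ := h
  have h2 : Code α y (u.length + t.length) = u ++ t := by
    rw [hwc]; congr 1; simp
  exact (Code_cancel rfl h2).1.symm

/- ### codeR evaluation -/

lemma codeR_ev_false {α x : ℝ} (hα : 0 ≤ α) (h0 : 0 ≤ x) (h1 : x < 1 - α) :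
    codeR α x = false := by
  unfold codeR
  rw [fract_self_of x h0 (by linarith)]
  simp [h1]

lemma codeR_ev_true {α x : ℝ} (hα : α < 1) (h0 : 1 - α ≤ x) (h1 : x < 1) :
    codeR α x = true := by
  unfold codeR
  rw [fract_self_of x (by linarith) h1]
  simp
  linarith

lemma codeR_ev_true' {α x : ℝ} (h0 : 1 - α ≤ Int.fract x) : codeR α x = true := by
  unfold codeR; simp; linarith

lemma codeR_ev_false' {α x : ℝ} (h1 : Int.fract x < 1 - α) : codeR α x = false := by
  unfold codeR; simp [h1]

/-- The "bit" translation: the letter at `x` is `r`(true) iff `{x+α} < α`. -/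
lemma bit_iff {α x : ℝ} (h0 : 0 < α) (h1 : α < 1) :
    Int.fract (x + α) < α ↔ ¬ (Int.fract x < 1 - α) := by
  have hf0 := Int.fract_nonneg x
  have hf1 := Int.fract_lt_one x
  rw [← fract_shift]
  rcases lt_or_ge (Int.fract x) (1 - α) with h | h
  · rw [fract_self_of _ (by linarith) (by linarith)]
    constructor
    · intro hc; linarith
    · intro hc; exact absurd h hc
  · rw [fract_of_one_le _ (by linarith) (by linarith)]
    constructor
    · intro _ hc; linarith
    · intro _; linarith

/- ### The invariant -/

structure Good (α : ℝ) (t : SDI) : Prop where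
  hl : 0 < t.l
  hr : 0 < t.r
  ha : 0 ≤ α - t.l
  hb : α + t.r ≤ 1 - α
  hMne : t.M ≠ []
  hPne : t.P ≠ []
  hMhead : t.M.head? = some false
  hPhead : t.P.head? = some true
  hwne : t.w ≠ []
  hA : ∀ y, 0 ≤ y → y < 1 → (Code α y t.w.length = t.w ↔ (α - t.l ≤ y ∧ y < α + t.r))
  hB : ∀ y, α - t.l ≤ y → y < α - t.l + t.r →
        Code α y (t.w.length + t.M.length) = t.w ++ t.M ∧
        Int.fract (y + t.M.length * α) = y + t.l
  hBp : ∀ y, α - t.l ≤ y → y < α - t.l + t.r → ∀ i : ℕ, 0 < i → i < t.M.length →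
        ¬(α - t.l ≤ Int.fract (y + i * α) ∧ Int.fract (y + i * α) < α + t.r)
  hC : ∀ y, α - t.l + t.r ≤ y → y < α + t.r →
        Code α y (t.w.length + t.P.length) = t.w ++ t.P ∧
        Int.fract (y + t.P.length * α) = y - t.r
  hCp : ∀ y, α - t.l + t.r ≤ y → y < α + t.r → ∀ i : ℕ, 0 < i → i < t.P.length →
        ¬(α - t.l ≤ Int.fract (y + i * α) ∧ Int.fract (y + i * α) < α + t.r)
  h8M : ∃ k : ℤ, (t.M.length : ℝ) * α = k + t.l
  h8P : ∃ k : ℤ, (t.P.length : ℝ) * α = k - t.r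
  h9 : ∃ k : ℤ, ((t.w.length : ℝ) + 2) * α = k + t.l - t.r
  hG : ∀ j : ℕ, j ≤ t.w.length →
        ¬(α - t.l < Int.fract (-(j : ℝ) * α) ∧ Int.fract (-(j : ℝ) * α) < α + t.r)

section Base

lemma good_init {α : ℝ} (h0 : 0 < α) (h2 : α < 1/2) :
    Good α ⟨α, 1 - 2 * α, [false], [false], [true, false]⟩ := by
  have h1 : α < 1 := by linarith
  have lenw : ([false] : List Bool).length = 1 := rfl
  have lenM : ([false] : List Bool).length = 1 := rfl
  have lenP : ([true, false] : List Bool).length = 2 := rfl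
  constructor <;> simp only [lenw, lenM, lenP]
  · exact h0
  · show (0:ℝ) < 1 - 2 * α; linarith
  · show (0:ℝ) ≤ α - α; linarith
  · show α + (1 - 2 * α) ≤ 1 - α; linarith
  · simp
  · simp
  · simp
  · simp
  · simp
  · -- hA
    intro y hy0 hy1
    rw [Code_one]
    constructor
    · intro h
      rcases lt_or_ge y (1 - α) with hlt | hge
      · constructor <;> [linarith; linarith]
      · rw [codeR_ev_true (by linarith) hge hy1] at h; simp at h
    · rintro ⟨hya, hyb⟩
      rw [codeR_ev_false (by linarith) hy0 (by linarith)]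
  · -- hB
    intro y hy0 hy1
    have e1 : ((1:ℕ):ℝ) = 1 := by norm_num
    constructor
    · show Code α y (1+1) = _
      rw [Code_add, Code_one, Code_one, e1]
      rw [codeR_ev_false (by linarith) (by linarith) (by linarith),
        codeR_ev_false (α := α) (by linarith) (by linarith) (by linarith)]
    · rw [e1, one_mul, fract_self_of _ (by linarith) (by linarith)]
  · -- hBp
    intro y hy0 hy1 i hi1 hi2
    omega
  · -- hC
    intro y hy0 hy1
    have e1 : ((1:ℕ):ℝ) = 1 := by norm_num
    have e2 : ((2:ℕ):ℝ) = 2 := by norm_num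
    constructor
    · show Code α y (1 + (1 + 1)) = _
      rw [Code_add, Code_one, Code_add, Code_one, Code_one, e1]
      rw [codeR_ev_false (by linarith) (by linarith) (by linarith)]
      rw [codeR_ev_true (α := α) (by linarith) (by linarith) (by linarith)]
      have : y + 1 * α + 1 * α = (y + 2 * α - 1) + 1 := by ring
      rw [this, ← codeR_fract, Int.fract_add_one, codeR_fract,
        codeR_ev_false (α := α) (by linarith) (by linarith) (by linarith)]
      rfl
    · rw [e2]
      have : y + 2 * α = (y + 2*α - 1) + 1 := by ring
      rw [this, Int.fract_add_one, fract_self_of _ (by linarith) (by linarith)]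
      ring
  · -- hCp
    intro y hy0 hy1 i hi1 hi2
    have : i = 1 := by omega
    subst this
    have e1 : ((1:ℕ):ℝ) = 1 := by norm_num
    rw [e1, one_mul, fract_self_of _ (by linarith) (by linarith)]
    rintro ⟨hh1, hh2⟩
    linarith
  · exact ⟨0, by norm_num⟩
  · exact ⟨1, by push_cast; ring⟩
  · exact ⟨1, by push_cast; ring⟩
  · -- hG
    intro j hj
    have : j = 0 ∨ j = 1 := by omega
    rcases this with rfl | rfl
    · norm_num [Int.fract_zero]
    · have : -((1:ℕ):ℝ) * α = (1 - α) + (-1 : ℤ) := by push_cast; ring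
      rw [this, Int.fract_add_intCast, fract_self_of _ (by linarith) (by linarith)]
      rintro ⟨hh1, hh2⟩
      linarith

end Base

/- ### glue helpers -/

lemma Code_head {α y : ℝ} {k : ℕ} (hk : 0 < k) :
    (Code α y k).head? = some (codeR α y) := by
  have : k = 1 + (k - 1) := by omega
  rw [this, Code_add, Code_one]
  rfl

lemma Code_glue {α y : ℝ} {m s s' : ℕ} {w u u' : List Bool} (hw : w.length = m)
    (h1 : Code α y (m + s) = w ++ u)
    (h2 : Code α (y + (s : ℝ) * α) (m + s') = w ++ u') :
    Code α y (m + s + s') = (w ++ u) ++ u' := by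
  have hw2 : Code α (y + (s : ℝ) * α) m = w := by
    rw [← Code_take (α := α) (y := y + (s : ℝ) * α) (s := m) (m := m + s') (by omega), h2,
      List.take_left' hw]
  have e2 : Code α y (s + m) = Code α y s ++ w := by rw [Code_add, hw2]
  have estar : Code α y s ++ w = w ++ u := by rw [← e2, Nat.add_comm s m, h1]
  have e3 : Code α y (m + s + s') = Code α y s ++ Code α (y + (s : ℝ) * α) (m + s') := by
    have hn : m + s + s' = s + (m + s') := by omega
    rw [hn, Code_add]
  rw [e3, h2, ← List.append_assoc, estar]

lemma fract_jump {α y : ℝ} {p i : ℕ} (hpi : p ≤ i) {y₁ : ℝ}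
    (hy₁ : Int.fract (y + (p : ℝ) * α) = y₁) :
    Int.fract (y + (i : ℝ) * α) = Int.fract (y₁ + ((i - p : ℕ) : ℝ) * α) := by
  rw [← hy₁, fract_shift]
  congr 1
  rw [Nat.cast_sub hpi]
  ring

lemma Code_jump {α y : ℝ} {y₁ : ℝ} (hy₁ : Int.fract y = y₁) (s : ℕ) :
    Code α y s = Code α y₁ s := by rw [← hy₁, Code_fract]

/- ### no back-visit lemmas -/

section Step

variable {α : ℝ} {t : SDI}

lemma gamma_c (h0 : 0 < α) (h2 : α < 1/2) (h : Good α t) :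
    Int.fract (-((t.w.length : ℝ) + 1) * α) = α - t.l + t.r := by
  obtain ⟨k9, e9⟩ := h.h9
  have hl := h.hl; have hr := h.hr; have ha := h.ha; have hb := h.hb
  have e : -((t.w.length : ℝ) + 1) * α = (α - t.l + t.r) + (-k9 : ℤ) := by
    push_cast
    linear_combination -e9
  rw [e, Int.fract_add_intCast]
  exact fract_self_of _ (by linarith) (by linarith)

lemma noBack_P (h0 : 0 < α) (h2 : α < 1/2) (h : Good α t) (hrl : t.r < t.l) :
    ∀ s : ℕ, 0 < s → s < t.P.length →
      ¬(α - t.l ≤ Int.fract ((α - t.l + t.r) - (s : ℝ) * α) ∧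
        Int.fract ((α - t.l + t.r) - (s : ℝ) * α) < α + t.r) := by
  have hl := h.hl; have hr := h.hr; have ha := h.ha; have hb := h.hb
  rintro s hs1 hs2 ⟨hz1, hz2⟩
  set z := Int.fract ((α - t.l + t.r) - (s : ℝ) * α) with hzdef
  have hzret : Int.fract (z + (s : ℝ) * α) = α - t.l + t.r := by
    rw [hzdef, fract_shift]
    have e : α - t.l + t.r - (s : ℝ) * α + (s : ℝ) * α = α - t.l + t.r := by ring
    rw [e]
    exact fract_self_of _ (by linarith) (by linarith)
  rcases lt_or_ge z (α - t.l + t.r) with hzl | hzr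
  · rcases lt_trichotomy s t.M.length with hsM | hsM | hsM
    · apply h.hBp z hz1 hzl s hs1 hsM
      rw [hzret]
      exact ⟨by linarith, by linarith⟩
    · have h1 := (h.hB z hz1 hzl).2
      rw [← hsM] at h1
      rw [h1] at hzret
      linarith
    · have h1 := (h.hB z hz1 hzl).2
      have hjump := fract_jump (le_of_lt hsM) h1
      apply h.hCp (z + t.l) (by linarith) (by linarith) (s - t.M.length) (by omega) (by omega)
      rw [← hjump, hzret]
      exact ⟨by linarith, by linarith⟩
  · apply h.hCp z hzr hz2 s hs1 hs2
    rw [hzret]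
    exact ⟨by linarith, by linarith⟩

lemma noBack_M (h0 : 0 < α) (h2 : α < 1/2) (h : Good α t) (hlr : t.l < t.r) :
    ∀ s : ℕ, 0 < s → s < t.M.length →
      ¬(α - t.l ≤ Int.fract ((α - t.l + t.r) - (s : ℝ) * α) ∧
        Int.fract ((α - t.l + t.r) - (s : ℝ) * α) < α + t.r) := by
  have hl := h.hl; have hr := h.hr; have ha := h.ha; have hb := h.hb
  rintro s hs1 hs2 ⟨hz1, hz2⟩
  set z := Int.fract ((α - t.l + t.r) - (s : ℝ) * α) with hzdef
  have hzret : Int.fract (z + (s : ℝ) * α) = α - t.l + t.r := by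
    rw [hzdef, fract_shift]
    have e : α - t.l + t.r - (s : ℝ) * α + (s : ℝ) * α = α - t.l + t.r := by ring
    rw [e]
    exact fract_self_of _ (by linarith) (by linarith)
  rcases lt_or_ge z (α - t.l + t.r) with hzl | hzr
  · apply h.hBp z hz1 hzl s hs1 hs2
    rw [hzret]
    exact ⟨by linarith, by linarith⟩
  · rcases lt_trichotomy s t.P.length with hsP | hsP | hsP
    · apply h.hCp z hzr hz2 s hs1 hsP
      rw [hzret]
      exact ⟨by linarith, by linarith⟩
    · have h1 := (h.hC z hzr hz2).2
      rw [← hsP] at h1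
      rw [h1] at hzret
      linarith
    · have h1 := (h.hC z hzr hz2).2
      have hjump := fract_jump (le_of_lt hsP) h1
      apply h.hBp (z - t.r) (by linarith) (by linarith) (s - t.P.length) (by omega) (by omega)
      rw [← hjump, hzret]
      exact ⟨by linarith, by linarith⟩

lemma good_D_P (h0 : 0 < α) (h2 : α < 1/2) (h : Good α t) (hrl : t.r < t.l) :
    ∀ j : ℕ, t.w.length + 1 < j → j ≤ t.w.length + t.P.length →
      ¬(α - t.l ≤ Int.fract (-(j : ℝ) * α) ∧ Int.fract (-(j : ℝ) * α) < α + t.r) := by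
  intro j hj1 hj2
  have hc := gamma_c h0 h2 h
  have e : Int.fract (-(j : ℝ) * α) =
      Int.fract ((α - t.l + t.r) - ((j - (t.w.length + 1) : ℕ) : ℝ) * α) := by
    rw [← hc, sub_eq_add_neg, fract_shift]
    congr 1
    rw [Nat.cast_sub (by omega)]
    push_cast
    ring
  rw [e]
  exact noBack_P h0 h2 h hrl _ (by omega) (by omega)

lemma good_D_M (h0 : 0 < α) (h2 : α < 1/2) (h : Good α t) (hlr : t.l < t.r) :
    ∀ j : ℕ, t.w.length + 1 < j → j ≤ t.w.length + t.M.length →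
      ¬(α - t.l ≤ Int.fract (-(j : ℝ) * α) ∧ Int.fract (-(j : ℝ) * α) < α + t.r) := by
  intro j hj1 hj2
  have hc := gamma_c h0 h2 h
  have e : Int.fract (-(j : ℝ) * α) =
      Int.fract ((α - t.l + t.r) - ((j - (t.w.length + 1) : ℕ) : ℝ) * α) := by
    rw [← hc, sub_eq_add_neg, fract_shift]
    congr 1
    rw [Nat.cast_sub (by omega)]
    push_cast
    ring
  rw [e]
  exact noBack_M h0 h2 h hlr _ (by omega) (by omega)

lemma good_ne (hirr : Irrational α) (h : Good α t) : t.l ≠ t.r := by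
  intro he
  obtain ⟨kM, eM⟩ := h.h8M
  obtain ⟨kP, eP⟩ := h.h8P
  have hM1 : 1 ≤ t.M.length := List.length_pos_iff.mpr h.hMne
  have hsum : ((t.M.length + t.P.length : ℕ) : ℝ) * α = ((kM + kP : ℤ) : ℝ) := by
    push_cast
    linear_combination eM + eP + he
  have : Irrational (((t.M.length + t.P.length : ℕ) : ℝ) * α) :=
    hirr.natCast_mul (by omega)
  rw [hsum] at this
  exact (this.ne_int _) rfl

end Step

section GoodStep

variable {α : ℝ} {t : SDI}

lemma good_step (hirr : Irrational α) (h0 : 0 < α) (h2 : α < 1/2) (h : Good α t) :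
    Good α t.step := by
  have hl := h.hl; have hr := h.hr; have ha := h.ha; have hb := h.hb
  have hne := good_ne hirr h
  have hmu1 : 0 < t.M.length := List.length_pos_iff.mpr h.hMne
  have hp1 : 0 < t.P.length := List.length_pos_iff.mpr h.hPne
  obtain ⟨kM, eM⟩ := h.h8M
  obtain ⟨kP, eP⟩ := h.h8P
  obtain ⟨k9, e9⟩ := h.h9
  rcases lt_or_gt_of_ne hne with hlr | hrl
  · -- M-branch : t.l < t.r
    have hstep : t.step = ⟨t.l, t.r - t.l, t.w ++ t.M, t.M, t.P ++ t.M⟩ := by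
      rw [SDI.step, if_neg (by linarith)]
    rw [hstep]
    constructor
    · exact hl
    · show 0 < t.r - t.l; linarith
    · exact ha
    · show α + (t.r - t.l) ≤ 1 - α; linarith
    · exact h.hMne
    · show t.P ++ t.M ≠ []; simp [h.hPne]
    · exact h.hMhead
    · show (t.P ++ t.M).head? = some true
      rw [List.head?_append_of_ne_nil _ h.hPne]; exact h.hPhead
    · show t.w ++ t.M ≠ []; simp [h.hwne]
    · -- hA
      intro y hy0 hy1
      show Code α y (t.w ++ t.M).length = t.w ++ t.M ↔ α - t.l ≤ y ∧ y < α + (t.r - t.l)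
      rw [List.length_append]
      constructor
      · intro hcode
        obtain ⟨hw, hM⟩ := Code_cancel rfl hcode
        have hyI := (h.hA y hy0 hy1).1 hw
        rcases lt_or_ge y (α - t.l + t.r) with hyl | hyr
        · exact ⟨hyI.1, by linarith⟩
        · exfalso
          obtain ⟨hwP, _⟩ := h.hC y hyr hyI.2
          obtain ⟨_, hP⟩ := Code_cancel rfl hwP
          have e1 : t.P.head? = some (codeR α (y + (t.w.length : ℝ) * α)) := by
            rw [← hP]; exact Code_head hp1
          have e2 : t.M.head? = some (codeR α (y + (t.w.length : ℝ) * α)) := by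
            rw [← hM]; exact Code_head hmu1
          rw [h.hPhead] at e1
          rw [h.hMhead] at e2
          have : (true : Bool) = false := Option.some.inj (e1.trans e2.symm)
          simp at this
      · rintro ⟨hy0', hy1'⟩
        exact (h.hB y hy0' (by linarith)).1
    · -- hB
      intro y hy0 hy1
      have hy0' : α - t.l ≤ y := hy0
      have hy1' : y < α - t.l + (t.r - t.l) := hy1
      obtain ⟨hb1, hb2⟩ := h.hB y hy0' (by linarith)
      obtain ⟨hb1', hb2'⟩ := h.hB (y + t.l) (by linarith) (by linarith)
      constructor
      · show Code α y ((t.w ++ t.M).length + t.M.length) = (t.w ++ t.M) ++ t.M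
        rw [List.length_append]
        refine Code_glue (m := t.w.length) (s := t.M.length) (s' := t.M.length) rfl hb1 ?_
        rw [Code_jump hb2 (t.w.length + t.M.length)]
        exact hb1'
      · show Int.fract (y + (t.M.length : ℝ) * α) = y + t.l
        exact hb2
    · -- hBp
      intro y hy0 hy1 i hi0 hi1
      have hy0' : α - t.l ≤ y := hy0
      have hy1' : y < α - t.l + (t.r - t.l) := hy1
      have hi1' : i < t.M.length := hi1
      show ¬(α - t.l ≤ Int.fract (y + (i : ℝ) * α) ∧
        Int.fract (y + (i : ℝ) * α) < α + (t.r - t.l))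
      rintro ⟨hcA, hcB⟩
      exact h.hBp y hy0' (by linarith) i hi0 hi1' ⟨hcA, by linarith⟩
    · -- hC
      intro y hy0 hy1
      have hy0' : α - t.l + (t.r - t.l) ≤ y := hy0
      have hy1' : y < α + (t.r - t.l) := hy1
      obtain ⟨hb1, hb2⟩ := h.hB y (by linarith) (by linarith)
      obtain ⟨hc1', hc2'⟩ := h.hC (y + t.l) (by linarith) (by linarith)
      obtain ⟨hb1'', hb2''⟩ := h.hB (y + t.l - t.r) (by linarith) (by linarith)
      have g1 : Code α y (t.w.length + t.M.length + t.P.length) = (t.w ++ t.M) ++ t.P := by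
        refine Code_glue (m := t.w.length) (s := t.M.length) (s' := t.P.length) rfl hb1 ?_
        rw [Code_jump hb2 (t.w.length + t.P.length)]
        exact hc1'
      have hfr2 : Int.fract (y + ((t.M.length + t.P.length : ℕ) : ℝ) * α) = y + t.l - t.r := by
        rw [fract_jump (p := t.M.length) (by omega) hb2]
        have e : t.M.length + t.P.length - t.M.length = t.P.length := by omega
        rw [e, hc2']
      have g2 : Code α y (t.w.length + (t.M.length + t.P.length) + t.M.length)
          = (t.w ++ (t.M ++ t.P)) ++ t.M := by
        refine Code_glue (m := t.w.length) (s := t.M.length + t.P.length)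
          (s' := t.M.length) rfl ?_ ?_
        · have e : t.w.length + (t.M.length + t.P.length)
              = t.w.length + t.M.length + t.P.length := by omega
          rw [e, g1, List.append_assoc]
        · rw [Code_jump hfr2 (t.w.length + t.M.length)]
          exact hb1''
      constructor
      · show Code α y ((t.w ++ t.M).length + (t.P ++ t.M).length) = (t.w ++ t.M) ++ (t.P ++ t.M)
        have e : (t.w ++ t.M).length + (t.P ++ t.M).length
            = t.w.length + (t.M.length + t.P.length) + t.M.length := by
          simp only [List.length_append]; omega
        rw [e, g2]
        simp [List.append_assoc]
      · show Int.fract (y + ((t.P ++ t.M).length : ℝ) * α) = y - (t.r - t.l)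
        have e : ((t.P ++ t.M).length : ℝ) = ((t.M.length + t.P.length : ℕ) : ℝ) := by
          simp only [List.length_append]; push_cast; ring
        rw [e, hfr2]
        ring
    · -- hCp
      intro y hy0 hy1 i hi0 hi1
      have hy0' : α - t.l + (t.r - t.l) ≤ y := hy0
      have hy1' : y < α + (t.r - t.l) := hy1
      have hi1' : i < (t.P ++ t.M).length := hi1
      rw [List.length_append] at hi1'
      show ¬(α - t.l ≤ Int.fract (y + (i : ℝ) * α) ∧
        Int.fract (y + (i : ℝ) * α) < α + (t.r - t.l))
      obtain ⟨hb1, hb2⟩ := h.hB y (by linarith) (by linarith)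
      rcases lt_trichotomy i t.M.length with hiM | hiM | hiM
      · rintro ⟨hcA, hcB⟩
        exact h.hBp y (by linarith) (by linarith) i hi0 hiM ⟨hcA, by linarith⟩
      · subst hiM
        rw [hb2]
        rintro ⟨_, hcon2⟩
        linarith
      · have hjump := fract_jump (le_of_lt hiM) hb2
        rw [hjump]
        rintro ⟨hcA, hcB⟩
        exact h.hCp (y + t.l) (by linarith) (by linarith) (i - t.M.length) (by omega)
          (by omega) ⟨hcA, by linarith⟩
    · -- h8M
      exact ⟨kM, eM⟩
    · -- h8P
      refine ⟨kP + kM, ?_⟩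
      show ((t.P ++ t.M).length : ℝ) * α = ((kP + kM : ℤ) : ℝ) - (t.r - t.l)
      rw [List.length_append]
      push_cast
      linear_combination eP + eM
    · -- h9
      refine ⟨k9 + kM, ?_⟩
      show (((t.w ++ t.M).length : ℝ) + 2) * α = ((k9 + kM : ℤ) : ℝ) + t.l - (t.r - t.l)
      rw [List.length_append]
      push_cast
      linear_combination e9 + eM
    · -- hG
      intro j hj
      have hj' : j ≤ t.w.length + t.M.length := by
        simpa [List.length_append] using hj
      show ¬(α - t.l < Int.fract (-(j : ℝ) * α) ∧ Int.fract (-(j : ℝ) * α) < α + (t.r - t.l))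
      rcases lt_trichotomy j (t.w.length + 1) with hjm | hjm | hjm
      · rintro ⟨hcA, hcB⟩
        exact h.hG j (by omega) ⟨hcA, by linarith⟩
      · subst hjm
        have hc := gamma_c h0 h2 h
        have e : (-(((t.w.length + 1 : ℕ)) : ℝ)) * α = -((t.w.length : ℝ) + 1) * α := by
          push_cast; ring
        rw [e, hc]
        rintro ⟨_, hcon2⟩
        linarith
      · rintro ⟨hcA, hcB⟩
        exact good_D_M h0 h2 h hlr j (by omega) (by omega)
          ⟨le_of_lt hcA, by linarith⟩
  · -- P-branch : t.r < t.l
    have hstep : t.step = ⟨t.l - t.r, t.r, t.w ++ t.P, t.M ++ t.P, t.P⟩ := by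
      rw [SDI.step, if_pos hrl]
    rw [hstep]
    constructor
    · show 0 < t.l - t.r; linarith
    · exact hr
    · show 0 ≤ α - (t.l - t.r); linarith
    · exact hb
    · show t.M ++ t.P ≠ []; simp [h.hMne]
    · exact h.hPne
    · show (t.M ++ t.P).head? = some false
      rw [List.head?_append_of_ne_nil _ h.hMne]; exact h.hMhead
    · exact h.hPhead
    · show t.w ++ t.P ≠ []; simp [h.hwne]
    · -- hA
      intro y hy0 hy1
      show Code α y (t.w ++ t.P).length = t.w ++ t.P ↔ α - (t.l - t.r) ≤ y ∧ y < α + t.r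
      rw [List.length_append]
      constructor
      · intro hcode
        obtain ⟨hw, hP⟩ := Code_cancel rfl hcode
        have hyI := (h.hA y hy0 hy1).1 hw
        rcases lt_or_ge y (α - t.l + t.r) with hyl | hyr
        · exfalso
          obtain ⟨hwM, _⟩ := h.hB y hyI.1 hyl
          obtain ⟨_, hM⟩ := Code_cancel rfl hwM
          have e1 : t.P.head? = some (codeR α (y + (t.w.length : ℝ) * α)) := by
            rw [← hP]; exact Code_head hp1
          have e2 : t.M.head? = some (codeR α (y + (t.w.length : ℝ) * α)) := by
            rw [← hM]; exact Code_head hmu1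
          rw [h.hPhead] at e1
          rw [h.hMhead] at e2
          have : (true : Bool) = false := Option.some.inj (e1.trans e2.symm)
          simp at this
        · exact ⟨by linarith, hyI.2⟩
      · rintro ⟨hy0', hy1'⟩
        exact (h.hC y (by linarith) hy1').1
    · -- hB
      intro y hy0 hy1
      have hy0' : α - (t.l - t.r) ≤ y := hy0
      have hy1' : y < α - (t.l - t.r) + t.r := hy1
      obtain ⟨hc1, hc2⟩ := h.hC y (by linarith) (by linarith)
      obtain ⟨hb1', hb2'⟩ := h.hB (y - t.r) (by linarith) (by linarith)
      obtain ⟨hc1'', hc2''⟩ := h.hC (y - t.r + t.l) (by linarith) (by linarith)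
      have g1 : Code α y (t.w.length + t.P.length + t.M.length) = (t.w ++ t.P) ++ t.M := by
        refine Code_glue (m := t.w.length) (s := t.P.length) (s' := t.M.length) rfl hc1 ?_
        rw [Code_jump hc2 (t.w.length + t.M.length)]
        exact hb1'
      have hfr2 : Int.fract (y + ((t.P.length + t.M.length : ℕ) : ℝ) * α) = y - t.r + t.l := by
        rw [fract_jump (p := t.P.length) (by omega) hc2]
        have e : t.P.length + t.M.length - t.P.length = t.M.length := by omega
        rw [e, hb2']
      have g2 : Code α y (t.w.length + (t.P.length + t.M.length) + t.P.length)
          = (t.w ++ (t.P ++ t.M)) ++ t.P := by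
        refine Code_glue (m := t.w.length) (s := t.P.length + t.M.length)
          (s' := t.P.length) rfl ?_ ?_
        · have e : t.w.length + (t.P.length + t.M.length)
              = t.w.length + t.P.length + t.M.length := by omega
          rw [e, g1, List.append_assoc]
        · rw [Code_jump hfr2 (t.w.length + t.P.length)]
          exact hc1''
      constructor
      · show Code α y ((t.w ++ t.P).length + (t.M ++ t.P).length) = (t.w ++ t.P) ++ (t.M ++ t.P)
        have e : (t.w ++ t.P).length + (t.M ++ t.P).length
            = t.w.length + (t.P.length + t.M.length) + t.P.length := by
          simp only [List.length_append]; omega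
        rw [e, g2]
        simp [List.append_assoc]
      · show Int.fract (y + ((t.M ++ t.P).length : ℝ) * α) = y + (t.l - t.r)
        have e : ((t.M ++ t.P).length : ℝ) = ((t.P.length + t.M.length : ℕ) : ℝ) := by
          simp only [List.length_append]; push_cast; ring
        rw [e, hfr2]
        ring
    · -- hBp
      intro y hy0 hy1 i hi0 hi1
      have hy0' : α - (t.l - t.r) ≤ y := hy0
      have hy1' : y < α - (t.l - t.r) + t.r := hy1
      have hi1' : i < (t.M ++ t.P).length := hi1
      rw [List.length_append] at hi1'
      show ¬(α - (t.l - t.r) ≤ Int.fract (y + (i : ℝ) * α) ∧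
        Int.fract (y + (i : ℝ) * α) < α + t.r)
      obtain ⟨hc1, hc2⟩ := h.hC y (by linarith) (by linarith)
      rcases lt_trichotomy i t.P.length with hiP | hiP | hiP
      · rintro ⟨hcA, hcB⟩
        exact h.hCp y (by linarith) (by linarith) i hi0 hiP ⟨by linarith, hcB⟩
      · subst hiP
        rw [hc2]
        rintro ⟨hcon1, _⟩
        linarith
      · have hjump := fract_jump (le_of_lt hiP) hc2
        rw [hjump]
        rintro ⟨hcA, hcB⟩
        exact h.hBp (y - t.r) (by linarith) (by linarith) (i - t.P.length) (by omega)
          (by omega) ⟨by linarith, hcB⟩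
    · -- hC
      intro y hy0 hy1
      have hy0' : α - (t.l - t.r) + t.r ≤ y := hy0
      have hy1' : y < α + t.r := hy1
      obtain ⟨hc1, hc2⟩ := h.hC y (by linarith) (by linarith)
      obtain ⟨hc1', hc2'⟩ := h.hC (y - t.r) (by linarith) (by linarith)
      constructor
      · show Code α y ((t.w ++ t.P).length + t.P.length) = (t.w ++ t.P) ++ t.P
        rw [List.length_append]
        refine Code_glue (m := t.w.length) (s := t.P.length) (s' := t.P.length) rfl hc1 ?_
        rw [Code_jump hc2 (t.w.length + t.P.length)]
        exact hc1'
      · show Int.fract (y + (t.P.length : ℝ) * α) = y - t.r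
        exact hc2
    · -- hCp
      intro y hy0 hy1 i hi0 hi1
      have hy0' : α - (t.l - t.r) + t.r ≤ y := hy0
      have hy1' : y < α + t.r := hy1
      have hi1' : i < t.P.length := hi1
      show ¬(α - (t.l - t.r) ≤ Int.fract (y + (i : ℝ) * α) ∧
        Int.fract (y + (i : ℝ) * α) < α + t.r)
      rintro ⟨hcA, hcB⟩
      exact h.hCp y (by linarith) hy1' i hi0 hi1' ⟨by linarith, hcB⟩
    · -- h8M
      refine ⟨kM + kP, ?_⟩
      show ((t.M ++ t.P).length : ℝ) * α = ((kM + kP : ℤ) : ℝ) + (t.l - t.r)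
      rw [List.length_append]
      push_cast
      linear_combination eM + eP
    · -- h8P
      exact ⟨kP, eP⟩
    · -- h9
      refine ⟨k9 + kP, ?_⟩
      show (((t.w ++ t.P).length : ℝ) + 2) * α = ((k9 + kP : ℤ) : ℝ) + (t.l - t.r) - t.r
      rw [List.length_append]
      push_cast
      linear_combination e9 + eP
    · -- hG
      intro j hj
      have hj' : j ≤ t.w.length + t.P.length := by
        simpa [List.length_append] using hj
      show ¬(α - (t.l - t.r) < Int.fract (-(j : ℝ) * α) ∧ Int.fract (-(j : ℝ) * α) < α + t.r)
      rcases lt_trichotomy j (t.w.length + 1) with hjm | hjm | hjm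
      · rintro ⟨hcA, hcB⟩
        exact h.hG j (by omega) ⟨by linarith, hcB⟩
      · subst hjm
        have hc := gamma_c h0 h2 h
        have e : (-(((t.w.length + 1 : ℕ)) : ℝ)) * α = -((t.w.length : ℝ) + 1) * α := by
          push_cast; ring
        rw [e, hc]
        rintro ⟨hcon1, _⟩
        linarith
      · rintro ⟨hcA, hcB⟩
        exact good_D_P h0 h2 h hrl j (by omega) (by omega)
          ⟨by linarith, hcB⟩

end GoodStep

lemma good_sdi {α : ℝ} (hirr : Irrational α) (h0 : 0 < α) (h2 : α < 1/2) (n : ℕ) :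
    Good α (sdi α (n + 1)) := by
  induction n with
  | zero => exact good_init h0 h2
  | succ n ih =>
    have e : sdi α (n + 1 + 1) = SDI.step (sdi α (n + 1)) := by
      unfold sdi
      simp only [Nat.add_sub_cancel]
      rw [Function.iterate_succ_apply']
    rw [e]
    exact good_step hirr h0 h2 ih

/- ### the chi chain characterization of code equality -/

def chi (α y d : ℝ) (j : ℕ) : Prop :=
  0 < Int.fract (-(j : ℝ) * α - y) ∧ Int.fract (-(j : ℝ) * α - y) ≤ d

lemma fract_sub_fract (c x : ℝ) : Int.fract (c - x) = Int.fract (c - Int.fract x) := by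
  have e : c - Int.fract x = (c - x) + (⌊x⌋ : ℝ) := by rw [Int.fract]; ring
  rw [e, Int.fract_add_intCast]

lemma fract_pos_ne {z y : ℝ} (hy0 : 0 ≤ y) (hy1 : y < 1) (hz0 : 0 ≤ z) (hz1 : z < 1)
    (hne : y ≠ z) : 0 < Int.fract (z - y) := by
  rcases lt_or_eq_of_le (Int.fract_nonneg (z - y)) with h | h
  · exact h
  · exfalso
    have hf : z - y - ⌊z - y⌋ = 0 := by rw [Int.fract] at h; linarith
    have h1 : (⌊z - y⌋ : ℝ) = z - y := by linarith
    have h2 : -1 < (⌊z - y⌋ : ℝ) := by linarith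
    have h3 : (⌊z - y⌋ : ℝ) < 1 := by linarith
    have h4 : ⌊z - y⌋ = 0 := by
      have h2' : (-1 : ℤ) < ⌊z - y⌋ := by exact_mod_cast h2
      have h3' : ⌊z - y⌋ < 1 := by exact_mod_cast h3
      omega
    rw [h4] at h1
    apply hne
    simp at h1
    linarith

lemma fract_of_neg (x : ℝ) (h0 : -1 ≤ x) (h1 : x < 0) : Int.fract x = x + 1 := by
  have h := Int.fract_add_intCast x 1
  push_cast at h
  rw [← h]
  exact fract_self_of _ (by linarith) (by linarith)

lemma perK {α : ℝ} (h0 : 0 < α) (h1 : α < 1) {y z : ℝ} (hy0 : 0 ≤ y) (hy1 : y < 1)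
    (hz0 : 0 ≤ z) (hz1 : z < 1) (hne : y ≠ z) (j : ℕ) :
    (codeR α (y + (j : ℝ) * α) = codeR α (z + (j : ℝ) * α)) ↔
      (chi α y (Int.fract (z - y)) (j + 1) ↔ chi α y (Int.fract (z - y)) j) := by
  have hd0 : 0 < Int.fract (z - y) := fract_pos_ne hy0 hy1 hz0 hz1 hne
  have hd1 : Int.fract (z - y) < 1 := Int.fract_lt_one _
  set d := Int.fract (z - y) with hd
  set u := Int.fract (y + (j : ℝ) * α + α) with hu
  have hu0 : 0 ≤ u := Int.fract_nonneg _
  have hu1 : u < 1 := Int.fract_lt_one _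
  have hcode : (codeR α (y + (j : ℝ) * α) = codeR α (z + (j : ℝ) * α)) ↔
      (Int.fract (y + (j : ℝ) * α + α) < α ↔ Int.fract (z + (j : ℝ) * α + α) < α) := by
    rw [bit_iff h0 h1, bit_iff h0 h1]
    unfold codeR
    by_cases hx : Int.fract (y + (j : ℝ) * α) < 1 - α <;>
      by_cases hx' : Int.fract (z + (j : ℝ) * α) < 1 - α <;> simp [hx, hx']
  have hv : Int.fract (z + (j : ℝ) * α + α) = Int.fract (u + d) := by
    rw [hu, hd]
    rw [show z + (j : ℝ) * α + α = (y + (j : ℝ) * α + α) + (z - y) from by ring]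
    rw [← fract_shift, ← fract_shift']
  have eA1 : Int.fract (-(((j + 1 : ℕ)) : ℝ) * α - y) = Int.fract (-u) := by
    have e : -(((j + 1 : ℕ)) : ℝ) * α - y = -(y + (j : ℝ) * α + α) := by push_cast; ring
    rw [e, hu, fract_neg_self]
  have eA0 : Int.fract (-(j : ℝ) * α - y) = Int.fract (α - u) := by
    have e : -(j : ℝ) * α - y = α - (y + (j : ℝ) * α + α) := by ring
    rw [e, hu, fract_sub_fract]
  rw [hcode, hv]
  unfold chi
  rw [eA1, eA0]
  rcases lt_or_ge (u + d) 1 with hcase | hcase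
  · -- chi (j+1) is false
    have hud : Int.fract (u + d) = u + d := fract_self_of _ (by linarith) hcase
    have hC : ¬(0 < Int.fract (-u) ∧ Int.fract (-u) ≤ d) := by
      rcases eq_or_lt_of_le hu0 with he | hpos
      · rw [← he]
        norm_num
      · have hfneg : Int.fract (-u) = 1 - u := by
          rw [fract_of_neg (-u) (by linarith) (by linarith)]; ring
        rw [hfneg]
        rintro ⟨_, hle⟩
        linarith
    rw [hud]
    rcases lt_trichotomy u α with h3 | h3 | h3
    · have hfa : Int.fract (α - u) = α - u := fract_self_of _ (by linarith) (by linarith)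
      constructor
      · intro hiff
        constructor
        · intro hc1; exact absurd hc1 hC
        · rintro ⟨_, hle⟩
          rw [hfa] at hle
          have := hiff.mp h3
          exfalso; linarith
      · intro hiff2
        constructor
        · intro _
          by_contra hnb
          push_neg at hnb
          have hchi0 : 0 < Int.fract (α - u) ∧ Int.fract (α - u) ≤ d := by
            rw [hfa]; exact ⟨by linarith, by linarith⟩
          exact hC (hiff2.mpr hchi0)
        · intro _; exact h3
    · have hfa : Int.fract (α - u) = 0 := by rw [h3]; simp
      constructor
      · intro _
        constructor
        · intro hc1; exact absurd hc1 hC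
        · rintro ⟨hpos, _⟩; rw [hfa] at hpos; exfalso; linarith
      · intro _
        constructor
        · intro hlt; exfalso; linarith [h3.le, h3.ge]
        · intro hlt; exfalso; linarith [h3.le, h3.ge]
    · have hfa : Int.fract (α - u) = α - u + 1 :=
        fract_of_neg _ (by linarith) (by linarith)
      constructor
      · intro _
        constructor
        · intro hc1; exact absurd hc1 hC
        · rintro ⟨_, hle⟩; rw [hfa] at hle; exfalso; linarith
      · intro _
        constructor
        · intro hlt; exfalso; linarith
        · intro hlt; exfalso; linarith
  · -- chi (j+1) is true
    have hud : Int.fract (u + d) = u + d - 1 := fract_of_one_le _ hcase (by linarith)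
    have hupos : 0 < u := by linarith
    have hfneg : Int.fract (-u) = 1 - u := by
      rw [fract_of_neg (-u) (by linarith) (by linarith)]; ring
    have hCt : 0 < Int.fract (-u) ∧ Int.fract (-u) ≤ d := by
      rw [hfneg]; exact ⟨by linarith, by linarith⟩
    rw [hud]
    rcases lt_trichotomy u α with h3 | h3 | h3
    · have hfa : Int.fract (α - u) = α - u := fract_self_of _ (by linarith) (by linarith)
      have hchi0 : 0 < Int.fract (α - u) ∧ Int.fract (α - u) ≤ d := by
        rw [hfa]; exact ⟨by linarith, by linarith⟩
      constructor
      · intro _; exact iff_of_true hCt hchi0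
      · intro _; exact iff_of_true h3 (by linarith)
    · have hfa : Int.fract (α - u) = 0 := by rw [h3]; simp
      constructor
      · intro hiff
        exfalso
        have : u < α := hiff.mpr (by linarith [h3.le, h3.ge])
        linarith [h3.le, h3.ge]
      · intro hiff
        exfalso
        have hchi0 := hiff.mp hCt
        rw [hfa] at hchi0
        linarith [hchi0.1]
    · have hfa : Int.fract (α - u) = α - u + 1 :=
        fract_of_neg _ (by linarith) (by linarith)
      constructor
      · intro hiff
        have hnb : ¬(u + d - 1 < α) := fun hb => by
          have := hiff.mpr hb; linarith
        constructor
        · intro _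
          rw [hfa]
          exact ⟨by linarith, by linarith⟩
        · intro _; exact hCt
      · intro hiff2
        constructor
        · intro hlt; exfalso; linarith
        · intro hb
          exfalso
          have hchi0 := hiff2.mp hCt
          rw [hfa] at hchi0
          linarith [hchi0.2]

lemma Code_eq_iff_letters {α : ℝ} {y z : ℝ} (m : ℕ) :
    Code α y m = Code α z m ↔
      ∀ j, j < m → codeR α (y + (j : ℝ) * α) = codeR α (z + (j : ℝ) * α) := by
  constructor
  · intro he j hj
    have e1 : (Code α y m)[j]'(by rw [Code_length]; exact hj) = codeR α (y + (j : ℝ) * α) := by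
      unfold Code
      simp
    have e2 : (Code α z m)[j]'(by rw [Code_length]; exact hj) = codeR α (z + (j : ℝ) * α) := by
      unfold Code
      simp
    rw [← e1, ← e2]
    exact List.getElem_of_eq he _
  · intro he
    unfold Code
    exact List.map_congr_left fun j hj => he j (List.mem_range.mp hj)

lemma Code_eq_iff_chi {α : ℝ} (h0 : 0 < α) (h1 : α < 1) {y z : ℝ} (hy0 : 0 ≤ y) (hy1 : y < 1)
    (hz0 : 0 ≤ z) (hz1 : z < 1) (hne : y ≠ z) (m : ℕ) :
    Code α y m = Code α z m ↔
      (∀ j : ℕ, j ≤ m →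
        (chi α y (Int.fract (z - y)) j ↔ chi α y (Int.fract (z - y)) 0)) := by
  rw [Code_eq_iff_letters]
  constructor
  · intro he j hj
    induction j with
    | zero => exact Iff.rfl
    | succ n ih =>
      have hn := ih (by omega)
      have hp := (perK h0 h1 hy0 hy1 hz0 hz1 hne n).mp (he n (by omega))
      exact hp.trans hn
  · intro hc j hj
    exact (perK h0 h1 hy0 hy1 hz0 hz1 hne j).mpr
      ((hc (j + 1) (by omega)).trans (hc j (by omega)).symm)

/- ### more code utilities -/

lemma codeR_add_int {α x : ℝ} (k : ℤ) : codeR α (x + k) = codeR α x := by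
  rw [← codeR_fract, Int.fract_add_intCast, codeR_fract]

lemma Code_add_int {α y : ℝ} (m : ℕ) (k : ℤ) : Code α (y + k) m = Code α y m := by
  unfold Code
  refine List.map_congr_left fun j _ => ?_
  rw [show y + (k : ℝ) + (j : ℝ) * α = (y + (j : ℝ) * α) + (k : ℝ) from by ring,
    codeR_add_int]

lemma Code_drop {α y : ℝ} {i n : ℕ} (h : i ≤ n) :
    (Code α y n).drop i = Code α (y + (i : ℝ) * α) (n - i) := by
  have e : Code α y n = Code α y i ++ Code α (y + (i : ℝ) * α) (n - i) := by
    rw [← Code_add, show i + (n - i) = n from by omega]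
  rw [e, List.drop_left' (Code_length α y i)]

lemma prefix_code_iff {α x : ℝ} {w : List Bool} {K : ℕ} (hK : w.length ≤ K) :
    w <+: Code α x K ↔ Code α x w.length = w := by
  constructor
  · intro h
    obtain ⟨tl, htl⟩ := h
    have h2 : Code α x (w.length + (K - w.length)) = w ++ tl := by
      rw [show w.length + (K - w.length) = K from by omega]
      exact htl.symm
    exact (Code_cancel rfl h2).1
  · intro h
    rw [← h]
    rw [← Code_take (α := α) (y := x) hK]
    exact List.take_prefix _ _

/- ### left special words are prefixes of the characteristic word -/

lemma leftSpecial_code {α : ℝ} (h0 : 0 < α) (h2 : α < 1/2) {u : List Bool}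
    (hls : LeftSpecial α u) : Code α α u.length = u := by
  have h1 : α < 1 := by linarith
  obtain ⟨hfu, htu⟩ := hls
  -- witness from true :: u  (gives z₂ ∈ [0, α))
  obtain ⟨x, hx0, hx1, hxe⟩ := (mem_LangR_iff α _).mp htu
  rw [show (true :: u).length = 1 + u.length from by simp [Nat.add_comm]] at hxe
  rw [Code_add, Code_one] at hxe
  have hxhead : codeR α x = true := by
    have := congrArg (fun l => l.head?) hxe
    simpa using this.symm
  have hxge : 1 - α ≤ x := by
    by_contra hlt
    push_neg at hlt
    rw [codeR_ev_false (by linarith) hx0 hlt] at hxhead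
    simp at hxhead
  have hutail : u = Code α (x + ((1 : ℕ) : ℝ) * α) u.length := by
    have := congrArg (fun l => l.tail) hxe
    simpa using this
  set z₂ := x + α - 1 with hz₂def
  have hz₂0 : 0 ≤ z₂ := by simp [hz₂def]; linarith
  have hz₂α : z₂ < α := by simp [hz₂def]; linarith
  have hu₂ : Code α z₂ u.length = u := by
    conv_rhs => rw [hutail]
    have e : x + ((1 : ℕ) : ℝ) * α = z₂ + ((1 : ℤ) : ℝ) := by
      rw [hz₂def]; push_cast; ring
    rw [e, Code_add_int]
  -- witness from false :: u (gives z₁ ∈ [α, 1))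
  obtain ⟨x', hx'0, hx'1, hx'e⟩ := (mem_LangR_iff α _).mp hfu
  rw [show (false :: u).length = 1 + u.length from by simp [Nat.add_comm]] at hx'e
  rw [Code_add, Code_one] at hx'e
  have hx'head : codeR α x' = false := by
    have := congrArg (fun l => l.head?) hx'e
    simpa using this.symm
  have hx'lt : x' < 1 - α := by
    by_contra hge
    push_neg at hge
    rw [codeR_ev_true h1 hge hx'1] at hx'head
    simp at hx'head
  set z₁ := x' + α with hz₁def
  have hz₁α : α ≤ z₁ := by simp [hz₁def]; linarith
  have hz₁1 : z₁ < 1 := by simp [hz₁def]; linarith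
  have hutail' : u = Code α (x' + ((1 : ℕ) : ℝ) * α) u.length := by
    have := congrArg (fun l => l.tail) hx'e
    simpa using this
  have hu₁ : Code α z₁ u.length = u := by
    conv_rhs => rw [hutail']
    congr 1
    rw [hz₁def]; push_cast; ring
  -- if z₁ = α we are done
  rcases eq_or_lt_of_le hz₁α with he | hz₁gt
  · rw [← he] at hu₁; exact hu₁
  -- main case : chain argument
  have hne21 : z₂ ≠ z₁ := by intro hh; rw [hh] at hz₂α; linarith
  have hcc : Code α z₂ u.length = Code α z₁ u.length := by rw [hu₂, hu₁]
  have hd : Int.fract (z₁ - z₂) = z₁ - z₂ :=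
    fract_self_of _ (by linarith) (by linarith)
  have hall := (Code_eq_iff_chi h0 h1 hz₂0 (by linarith) (by linarith) hz₁1 hne21
    u.length).mp hcc
  have hchi0 : ¬ chi α z₂ (Int.fract (z₁ - z₂)) 0 := by
    unfold chi
    rw [hd]
    push_cast
    rw [show -(0 : ℝ) * α - z₂ = -z₂ from by ring]
    rintro ⟨hg0, hgd⟩
    rcases eq_or_lt_of_le hz₂0 with he2 | he2
    · rw [← he2] at hg0
      norm_num at hg0
    · rw [fract_of_neg (-z₂) (by linarith) (by linarith)] at hgd
      linarith
  have hnone : ∀ j : ℕ, j ≤ u.length → ¬ chi α z₂ (Int.fract (z₁ - z₂)) j := by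
    intro j hj hcj
    exact hchi0 ((hall j hj).mp hcj)
  -- now compare z₂ with α
  have hdα : Int.fract (α - z₂) = α - z₂ := fract_self_of _ (by linarith) (by linarith)
  have hne2α : z₂ ≠ α := by intro hh; rw [hh] at hz₂α; linarith
  refine ((Code_eq_iff_chi h0 h1 hz₂0 (by linarith) (le_of_lt h0) h1 hne2α u.length).mpr
    ?_).symm.trans hu₂
  intro j hj
  constructor
  · intro hcj
    exfalso
    apply hnone j hj
    unfold chi at hcj ⊢
    rw [hd]
    rw [hdα] at hcj
    exact ⟨hcj.1, by linarith [hcj.2]⟩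
  · intro hc0
    exfalso
    apply hchi0
    unfold chi at hc0 ⊢
    rw [hd]
    rw [hdα] at hc0
    exact ⟨hc0.1, by linarith [hc0.2]⟩

/- ### locating the (m+1)-st partition point -/

lemma gammaIn {α : ℝ} (h0 : 0 < α) (h1 : α < 1) {y z : ℝ} (hy0 : 0 ≤ y) (hy1 : y < 1)
    (hz0 : 0 ≤ z) (hz1 : z < 1) {m : ℕ}
    (hcode : Code α y m = Code α z m)
    (hlet : codeR α (y + (m : ℝ) * α) ≠ codeR α (z + (m : ℝ) * α))
    {A B : ℝ} (hyA : A ≤ y) (hyB : y < B) (hzA : A ≤ z) (hzB : z < B) :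
    A ≤ Int.fract (-((m + 1 : ℕ) : ℝ) * α) ∧ Int.fract (-((m + 1 : ℕ) : ℝ) * α) < B := by
  have hne : y ≠ z := by rintro rfl; exact hlet rfl
  have hd0 : 0 < Int.fract (z - y) := fract_pos_ne hy0 hy1 hz0 hz1 hne
  have hd1 : Int.fract (z - y) < 1 := Int.fract_lt_one _
  set d := Int.fract (z - y) with hdd
  have hniff : ¬ (chi α y d (m + 1) ↔ chi α y d m) := by
    intro hiff
    exact hlet ((perK h0 h1 hy0 hy1 hz0 hz1 hne m).mpr hiff)
  have hall := (Code_eq_iff_chi h0 h1 hy0 hy1 hz0 hz1 hne m).mp hcode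
  have hm0 : chi α y d m ↔ chi α y d 0 := hall m le_rfl
  set g := Int.fract (-((m + 1 : ℕ) : ℝ) * α - y) with hg
  have hgam : Int.fract (-((m + 1 : ℕ) : ℝ) * α) = Int.fract (g + y) := by
    rw [hg, fract_shift]
    congr 1
    ring
  have hg0 : 0 ≤ g := Int.fract_nonneg _
  have hg1 : g < 1 := Int.fract_lt_one _
  have e0 : -((0 : ℕ) : ℝ) * α - y = -y := by push_cast; ring
  have hchi0_iff : chi α y d 0 ↔ z < y := by
    unfold chi
    rw [e0]
    constructor
    · rintro ⟨hp, hq⟩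
      by_contra hzy
      push_neg at hzy
      have hylt : y < z := lt_of_le_of_ne hzy hne
      have hdval : d = z - y := by
        rw [hdd]; exact fract_self_of _ (by linarith) (by linarith)
      rcases eq_or_lt_of_le hy0 with he | hyp
      · rw [← he] at hp
        norm_num at hp
      · rw [fract_of_neg (-y) (by linarith) (by linarith)] at hq
        linarith
    · intro hzy
      have hdval : d = z - y + 1 := by
        rw [hdd]; exact fract_of_neg _ (by linarith) (by linarith)
      have hyp : 0 < y := lt_of_le_of_lt hz0 hzy
      rw [fract_of_neg (-y) (by linarith) (by linarith)]
      exact ⟨by linarith, by linarith⟩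
  by_cases hchi0 : chi α y d 0
  · -- z < y; chi m true hence chi (m+1) false
    have hzy : z < y := hchi0_iff.mp hchi0
    have hdval : d = z - y + 1 := by
      rw [hdd]; exact fract_of_neg _ (by linarith) (by linarith)
    have hym : chi α y d m := hm0.mpr hchi0
    have hnot1 : ¬ chi α y d (m + 1) := fun hc => hniff (iff_of_true hc hym)
    unfold chi at hnot1
    rw [← hg] at hnot1
    rcases eq_or_lt_of_le hg0 with hgz | hgp
    · rw [hgam, ← hgz, zero_add, fract_self_of y hy0 hy1]
      exact ⟨hyA, hyB⟩
    · have hgd : d < g := by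
        by_contra hle
        push_neg at hle
        exact hnot1 ⟨hgp, hle⟩
      have h1y : 1 ≤ g + y := by linarith
      have hval : Int.fract (g + y) = g + y - 1 := fract_of_one_le _ h1y (by linarith)
      rw [hgam, hval]
      constructor
      · linarith
      · linarith
  · -- y < z; chi m false hence chi (m+1) true
    have hyz : y < z := by
      rcases lt_trichotomy y z with hlt | heq | hgt
      · exact hlt
      · exact absurd heq hne
      · exact absurd (hchi0_iff.mpr hgt) hchi0
    have hdval : d = z - y := by
      rw [hdd]; exact fract_self_of _ (by linarith) (by linarith)
    have hym : ¬ chi α y d m := fun hm' => hchi0 (hm0.mp hm')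
    have hc1 : chi α y d (m + 1) := by
      by_contra hc
      exact hniff (iff_of_false hc hym)
    unfold chi at hc1
    rw [← hg] at hc1
    obtain ⟨hgp, hgd⟩ := hc1
    have hval : Int.fract (g + y) = g + y :=
      fract_self_of _ (by linarith) (by linarith)
    rw [hgam, hval]
    constructor
    · linarith
    · linarith

/- ### sdi utilities -/

lemma sdi_one (α : ℝ) : sdi α 1 = ⟨α, 1 - 2 * α, [false], [false], [true, false]⟩ := rfl

lemma sdi_step {α : ℝ} {n : ℕ} (hn : 1 ≤ n) : sdi α (n + 1) = SDI.step (sdi α n) := by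
  unfold sdi
  rw [show n + 1 - 1 = (n - 1) + 1 from by omega, Function.iterate_succ_apply']

lemma good_at {α : ℝ} (hirr : Irrational α) (h0 : 0 < α) (h2 : α < 1/2) {n : ℕ}
    (hn : 1 ≤ n) : Good α (sdi α n) := by
  have := good_sdi hirr h0 h2 (n - 1)
  rwa [show n - 1 + 1 = n from by omega] at this

lemma step_w_length (t : SDI) :
    (SDI.step t).w.length = t.w.length + (if t.r < t.l then t.P.length else t.M.length) := by
  unfold SDI.step
  split <;> simp

lemma step_len_lt {α : ℝ} {t : SDI} (h : Good α t) :
    t.w.length < (SDI.step t).w.length := by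
  rw [step_w_length]
  have h1 := List.length_pos_iff.mpr h.hMne
  have h2 := List.length_pos_iff.mpr h.hPne
  split <;> omega

lemma exists_level {α : ℝ} (hirr : Irrational α) (h0 : 0 < α) (h2 : α < 1/2) {m : ℕ}
    (hm : 1 ≤ m) :
    ∃ n : ℕ, 1 ≤ n ∧ (sdi α n).w.length ≤ m ∧ m < (sdi α (n + 1)).w.length := by
  induction m with
  | zero => omega
  | succ m ih =>
    rcases Nat.eq_or_lt_of_le hm with he | hlt
    · have hm0 : m = 0 := by omega
      subst hm0
      have hone : (sdi α 1).w.length = 1 := rfl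
      refine ⟨1, le_rfl, by omega, ?_⟩
      have hlt2 := step_len_lt (good_at hirr h0 h2 (le_refl 1) (α := α))
      rw [sdi_step le_rfl]
      omega
    · obtain ⟨n, hn1, hn2, hn3⟩ := ih (by omega)
      rcases lt_or_ge (m + 1) ((sdi α (n + 1)).w.length) with hc | hc
      · exact ⟨n, hn1, by omega, hc⟩
      · have he : m + 1 = (sdi α (n + 1)).w.length := by omega
        refine ⟨n + 1, by omega, by omega, ?_⟩
        rw [sdi_step (by omega : 1 ≤ n + 1)]
        rw [he]
        exact step_len_lt (good_at hirr h0 h2 (by omega : 1 ≤ n + 1))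

/- ### w_n is bispecial and in the language -/

lemma good_code_alpha {α : ℝ} (h0 : 0 < α) (h2 : α < 1/2) {t : SDI} (h : Good α t) :
    Code α α t.w.length = t.w := by
  have hb := h.hb
  exact (h.hA α (le_of_lt h0) (by linarith)).mpr ⟨by linarith [h.hl], by linarith [h.hr]⟩

lemma good_w_mem {α : ℝ} (h0 : 0 < α) (h2 : α < 1/2) {t : SDI} (h : Good α t) :
    t.w ∈ LangR α := by
  rw [mem_LangR_iff]
  exact ⟨α, le_of_lt h0, by linarith, (good_code_alpha h0 h2 h).symm⟩

lemma head_take {b : Bool} {L : List Bool} (hL : L.head? = some b) : L.take 1 = [b] := by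
  cases L with
  | nil => simp at hL
  | cons x xs => simp at hL; simp [hL]

lemma good_rightSpecial {α : ℝ} (h0 : 0 < α) (h2 : α < 1/2) {t : SDI} (h : Good α t) :
    RightSpecial α t.w := by
  have hl := h.hl; have hr := h.hr; have ha := h.ha; have hb := h.hb
  have hmu1 : 0 < t.M.length := List.length_pos_iff.mpr h.hMne
  have hp1 : 0 < t.P.length := List.length_pos_iff.mpr h.hPne
  constructor
  · -- w ++ [false] via left piece
    obtain ⟨hB1, _⟩ := h.hB (α - t.l) le_rfl (by linarith)
    rw [mem_LangR_iff]
    refine ⟨α - t.l, by linarith, by linarith, ?_⟩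
    have e1 : (t.w ++ [false]).length = t.w.length + 1 := by simp
    rw [e1]
    have e2 : Code α (α - t.l) (t.w.length + 1) = (t.w ++ t.M).take (t.w.length + 1) := by
      rw [← hB1]
      exact (Code_take (by omega)).symm
    rw [e2, List.take_append, List.take_of_length_le (by omega)]
    congr 1
    have e3 : t.w.length + 1 - t.w.length = 1 := by omega
    rw [e3, head_take h.hMhead]
  · obtain ⟨hC1, _⟩ := h.hC (α - t.l + t.r) le_rfl (by linarith)
    rw [mem_LangR_iff]
    refine ⟨α - t.l + t.r, by linarith, by linarith, ?_⟩
    have e1 : (t.w ++ [true]).length = t.w.length + 1 := by simp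
    rw [e1]
    have e2 : Code α (α - t.l + t.r) (t.w.length + 1) = (t.w ++ t.P).take (t.w.length + 1) := by
      rw [← hC1]
      exact (Code_take (by omega)).symm
    rw [e2, List.take_append, List.take_of_length_le (by omega)]
    congr 1
    have e3 : t.w.length + 1 - t.w.length = 1 := by omega
    rw [e3, head_take h.hPhead]

lemma good_leftSpecial {α : ℝ} (h0 : 0 < α) (h2 : α < 1/2) {t : SDI} (h : Good α t) :
    LeftSpecial α t.w := by
  have hl := h.hl; have hr := h.hr; have ha := h.ha; have hb := h.hb
  constructor
  · -- false :: w via y = 0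
    rw [mem_LangR_iff]
    refine ⟨0, le_rfl, by linarith, ?_⟩
    have e1 : (false :: t.w).length = 1 + t.w.length := by simp [Nat.add_comm]
    rw [e1, Code_add, Code_one]
    rw [codeR_ev_false (by linarith) le_rfl (by linarith)]
    have e2 : (0 : ℝ) + ((1 : ℕ) : ℝ) * α = α := by push_cast; ring
    rw [e2, good_code_alpha h0 h2 h]
    rfl
  · -- true :: w via y = 1 - l
    rw [mem_LangR_iff]
    refine ⟨1 - t.l, by linarith, by linarith, ?_⟩
    have e1 : (true :: t.w).length = 1 + t.w.length := by simp [Nat.add_comm]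
    rw [e1, Code_add, Code_one]
    rw [codeR_ev_true (by linarith) (by linarith) (by linarith)]
    have e2 : (1 : ℝ) - t.l + ((1 : ℕ) : ℝ) * α = (α - t.l) + ((1 : ℤ) : ℝ) := by
      push_cast; ring
    rw [e2, Code_add_int]
    have e3 : Code α (α - t.l) t.w.length = t.w :=
      (h.hA (α - t.l) (by linarith) (by linarith)).mpr ⟨le_rfl, by linarith⟩
    rw [e3]
    rfl

/- ### no bispecial words strictly between levels -/

lemma mid_not_rightSpecial {α : ℝ} (hirr : Irrational α) (h0 : 0 < α) (h2 : α < 1/2)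
    {n : ℕ} (hn : 1 ≤ n) {m : ℕ} (hm1 : (sdi α n).w.length < m)
    (hm2 : m < (sdi α (n + 1)).w.length) :
    ¬ RightSpecial α (Code α α m) := by
  have h1 : α < 1 := by linarith
  set t := sdi α n with ht
  have h := good_at hirr h0 h2 hn
  rw [← ht] at h
  have hl := h.hl; have hr := h.hr; have ha := h.ha; have hb := h.hb
  rintro ⟨hfmem, htmem⟩
  -- extract witnesses
  obtain ⟨yf, hyf0, hyf1, hyfe⟩ := (mem_LangR_iff α _).mp hfmem
  obtain ⟨yt, hyt0, hyt1, hyte⟩ := (mem_LangR_iff α _).mp htmem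
  rw [show (Code α α m ++ [false]).length = m + 1 from by simp [Code_length]] at hyfe
  rw [show (Code α α m ++ [true]).length = m + 1 from by simp [Code_length]] at hyte
  obtain ⟨hyfc, hyfl⟩ := Code_cancel (Code_length α α m) hyfe.symm
  obtain ⟨hytc, hytl⟩ := Code_cancel (Code_length α α m) hyte.symm
  rw [Code_one] at hyfl hytl
  have hyflet : codeR α (yf + (m : ℝ) * α) = false := by
    have := congrArg (fun l => l.head?) hyfl
    simpa using this
  have hytlet : codeR α (yt + (m : ℝ) * α) = true := by
    have := congrArg (fun l => l.head?) hytl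
    simpa using this
  -- both in [a, b)
  have hwn : Code α α t.w.length = t.w := good_code_alpha h0 h2 h
  have hmn : t.w.length ≤ m := le_of_lt hm1
  have hyfw : Code α yf t.w.length = t.w := by
    have e := congrArg (fun l => l.take t.w.length) hyfc
    rw [Code_take hmn, Code_take hmn, hwn] at e
    exact e
  have hytw : Code α yt t.w.length = t.w := by
    have e := congrArg (fun l => l.take t.w.length) hytc
    rw [Code_take hmn, Code_take hmn, hwn] at e
    exact e
  have hyfI := (h.hA yf hyf0 hyf1).mp hyfw
  have hytI := (h.hA yt hyt0 hyt1).mp hytw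
  -- codes of yf and yt agree up to m
  have hcode : Code α yf m = Code α yt m := by rw [hyfc, hytc]
  have hlet : codeR α (yf + (m : ℝ) * α) ≠ codeR α (yt + (m : ℝ) * α) := by
    rw [hyflet, hytlet]; simp
  have hγ := gammaIn h0 h1 hyf0 hyf1 hyt0 hyt1 hcode hlet hyfI.1 hyfI.2 hytI.1 hytI.2
  -- contradiction with good_D
  have hne := good_ne hirr h
  rcases lt_or_gt_of_ne hne with hlr | hrl
  · have hstep : (sdi α (n + 1)).w.length = t.w.length + t.M.length := by
      rw [sdi_step hn, ← ht, step_w_length, if_neg (by linarith)]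
    exact good_D_M h0 h2 h hlr (m + 1) (by omega) (by omega) hγ
  · have hstep : (sdi α (n + 1)).w.length = t.w.length + t.P.length := by
      rw [sdi_step hn, ← ht, step_w_length, if_pos hrl]
    exact good_D_P h0 h2 h hrl (m + 1) (by omega) (by omega) hγ

/- ### return words -/

section Return

variable {α : ℝ} {t : SDI}

lemma occ_iff (h : Good α t) {y : ℝ} {T i : ℕ} {Z : List Bool}
    (hcode : Code α y (t.w.length + T) = t.w ++ Z) (hi : i ≤ T) :
    t.w <+: (t.w ++ Z).drop i ↔
      (α - t.l ≤ Int.fract (y + (i : ℝ) * α) ∧ Int.fract (y + (i : ℝ) * α) < α + t.r) := by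
  rw [← hcode, Code_drop (by omega)]
  rw [prefix_code_iff (by omega)]
  rw [← Code_fract]
  exact h.hA _ (Int.fract_nonneg _) (Int.fract_lt_one _)

lemma occ_big (h : Good α t) {Z : List Bool} {i : ℕ} (hi : Z.length < i) :
    ¬ t.w <+: (t.w ++ Z).drop i := by
  intro hp
  have h1 := hp.length_le
  rw [List.length_drop, List.length_append] at h1
  have h2 := List.length_pos_iff.mpr h.hwne
  omega

lemma good_return (h0 : 0 < α) (h2 : α < 1/2) (h : Good α t) :
    {Z | IsReturnWord α t.w Z} = {t.M, t.P} := by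
  have hl := h.hl; have hr := h.hr; have ha := h.ha; have hb := h.hb
  have hmu1 : 0 < t.M.length := List.length_pos_iff.mpr h.hMne
  have hp1 : 0 < t.P.length := List.length_pos_iff.mpr h.hPne
  ext Z
  simp only [Set.mem_setOf_eq, Set.mem_insert_iff, Set.mem_singleton_iff]
  constructor
  · rintro ⟨hmem, hZne, hset⟩
    obtain ⟨y, hy0, hy1, hye⟩ := (mem_LangR_iff α _).mp hmem
    rw [show (t.w ++ Z).length = t.w.length + Z.length from by simp] at hye
    have hcode := hye.symm
    have hTpos : 0 < Z.length := List.length_pos_iff.mpr hZne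
    have hyI : α - t.l ≤ y ∧ y < α + t.r := by
      obtain ⟨hw, _⟩ := Code_cancel rfl hcode
      exact (h.hA y hy0 hy1).mp hw
    have hZocc : t.w <+: (t.w ++ Z).drop Z.length := by
      have hmem2 : Z.length ∈ ({0, Z.length} : Set ℕ) := by simp
      rw [← hset] at hmem2
      exact hmem2
    have hZmem := (occ_iff h hcode le_rfl).mp hZocc
    have hno : ∀ i : ℕ, 0 < i → i < Z.length →
        ¬(α - t.l ≤ Int.fract (y + (i : ℝ) * α) ∧
          Int.fract (y + (i : ℝ) * α) < α + t.r) := by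
      intro i hi1 hi2 hcon
      have hmem3 : i ∈ ({0, Z.length} : Set ℕ) := by
        rw [← hset]
        exact (occ_iff h hcode (le_of_lt hi2)).mpr hcon
      simp at hmem3
      omega
    rcases lt_or_ge y (α - t.l + t.r) with hyl | hyr
    · -- left piece : Z = M
      left
      obtain ⟨hB1, hB2⟩ := h.hB y hyI.1 hyl
      have hZM : Z.length = t.M.length := by
        rcases lt_trichotomy Z.length t.M.length with hc | hc | hc
        · exact absurd hZmem (h.hBp y hyI.1 hyl Z.length hTpos hc)
        · exact hc
        · exfalso
          apply hno t.M.length hmu1 hc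
          rw [hB2]
          exact ⟨by linarith, by linarith⟩
      rw [hZM] at hcode
      exact (List.append_cancel_left (hB1.symm.trans hcode)).symm
    · -- right piece : Z = P
      right
      obtain ⟨hC1, hC2⟩ := h.hC y hyr hyI.2
      have hZP : Z.length = t.P.length := by
        rcases lt_trichotomy Z.length t.P.length with hc | hc | hc
        · exact absurd hZmem (h.hCp y hyr hyI.2 Z.length hTpos hc)
        · exact hc
        · exfalso
          apply hno t.P.length hp1 hc
          rw [hC2]
          exact ⟨by linarith, by linarith⟩
      rw [hZP] at hcode
      exact (List.append_cancel_left (hC1.symm.trans hcode)).symm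
  · rintro (rfl | rfl)
    · -- Z = M
      obtain ⟨hB1, hB2⟩ := h.hB (α - t.l) le_rfl (by linarith)
      refine ⟨?_, h.hMne, ?_⟩
      · rw [mem_LangR_iff]
        refine ⟨α - t.l, by linarith, by linarith, ?_⟩
        rw [show (t.w ++ t.M).length = t.w.length + t.M.length from by simp]
        exact hB1.symm
      · ext i
        simp only [Set.mem_setOf_eq, Set.mem_insert_iff, Set.mem_singleton_iff]
        constructor
        · intro hocc
          by_contra hne'
          push_neg at hne'
          rcases le_or_gt i t.M.length with hle | hgt
          · have hmem4 := (occ_iff h hB1 hle).mp hocc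
            exact h.hBp (α - t.l) le_rfl (by linarith) i
              (by omega) (by omega) hmem4
          · exact occ_big h hgt hocc
        · rintro (rfl | rfl)
          · simp
          · refine (occ_iff h hB1 le_rfl).mpr ?_
            rw [hB2]
            exact ⟨by linarith, by linarith⟩
    · -- Z = P
      obtain ⟨hC1, hC2⟩ := h.hC (α - t.l + t.r) le_rfl (by linarith)
      refine ⟨?_, h.hPne, ?_⟩
      · rw [mem_LangR_iff]
        refine ⟨α - t.l + t.r, by linarith, by linarith, ?_⟩
        rw [show (t.w ++ t.P).length = t.w.length + t.P.length from by simp]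
        exact hC1.symm
      · ext i
        simp only [Set.mem_setOf_eq, Set.mem_insert_iff, Set.mem_singleton_iff]
        constructor
        · intro hocc
          by_contra hne'
          push_neg at hne'
          rcases le_or_gt i t.P.length with hle | hgt
          · have hmem4 := (occ_iff h hC1 hle).mp hocc
            exact h.hCp (α - t.l + t.r) le_rfl (by linarith) i
              (by omega) (by omega) hmem4
          · exact occ_big h hgt hocc
        · rintro (rfl | rfl)
          · simp
          · refine (occ_iff h hC1 le_rfl).mpr ?_
            rw [hC2]
            exact ⟨by linarith, by linarith⟩

end Return

/-- Proposition: the `w_n`, `n ≥ 1`, are exactly the nonempty bispecial words of `L(R)`;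
`w_{n+1}` is the shortest bispecial word having `w_n` as a proper prefix; and the return
words of `w_n` are exactly `M_n` and `P_n`. -/
theorem bispecial_and_return_words
    (α : ℝ) (hirr : Irrational α) (h0 : 0 < α) (h2 : α < 1/2) :
    ({w | w ∈ LangR α ∧ w ≠ [] ∧ Bispecial α w} =
        {w : List Bool | ∃ n : ℕ, 1 ≤ n ∧ w = (sdi α n).w}) ∧
    (∀ n : ℕ, 1 ≤ n →
      ((sdi α n).w <+: (sdi α (n + 1)).w ∧ (sdi α n).w ≠ (sdi α (n + 1)).w ∧
        Bispecial α (sdi α (n + 1)).w) ∧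
      ∀ u : List Bool, u ∈ LangR α → Bispecial α u →
        (sdi α n).w <+: u → u ≠ (sdi α n).w →
          (sdi α (n + 1)).w.length ≤ u.length) ∧
    (∀ n : ℕ, 1 ≤ n →
      {Z | IsReturnWord α (sdi α n).w Z} = {(sdi α n).M, (sdi α n).P}) := by
  have h1 : α < 1 := by linarith
  refine ⟨?_, ?_, ?_⟩
  · -- part 1
    ext u
    simp only [Set.mem_setOf_eq]
    constructor
    · rintro ⟨humem, hune, hbs⟩
      have hm1 : 1 ≤ u.length := List.length_pos_iff.mpr hune
      have hu : Code α α u.length = u := leftSpecial_code h0 h2 hbs.2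
      obtain ⟨n, hn1, hle, hlt⟩ := exists_level hirr h0 h2 hm1
      refine ⟨n, hn1, ?_⟩
      rcases eq_or_lt_of_le hle with he | hlt2
      · rw [← hu, ← he, good_code_alpha h0 h2 (good_at hirr h0 h2 hn1)]
      · exfalso
        have hrs : RightSpecial α (Code α α u.length) := by rw [hu]; exact hbs.1
        exact mid_not_rightSpecial hirr h0 h2 hn1 hlt2 hlt hrs
    · rintro ⟨n, hn1, rfl⟩
      have h := good_at hirr h0 h2 hn1
      exact ⟨good_w_mem h0 h2 h, h.hwne,
        good_rightSpecial h0 h2 h, good_leftSpecial h0 h2 h⟩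
  · -- part 2
    intro n hn1
    have h := good_at hirr h0 h2 hn1
    have hstep := sdi_step hn1 (α := α)
    constructor
    · refine ⟨?_, ?_, ?_⟩
      · rw [hstep]
        by_cases hc : (sdi α n).r < (sdi α n).l
        · rw [SDI.step, if_pos hc]; exact List.prefix_append _ _
        · rw [SDI.step, if_neg hc]; exact List.prefix_append _ _
      · intro hcon
        have hlt := step_len_lt h
        rw [← hstep] at hlt
        have := congrArg List.length hcon
        omega
      · have h' : Good α (sdi α (n + 1)) := good_at hirr h0 h2 (by omega)
        exact ⟨good_rightSpecial h0 h2 h', good_leftSpecial h0 h2 h'⟩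
    · intro u humem hbs hpre hneq
      have hm1 : 1 ≤ u.length := by
        have ha1 := hpre.length_le
        have ha2 := List.length_pos_iff.mpr h.hwne
        omega
      have hu : Code α α u.length = u := leftSpecial_code h0 h2 hbs.2
      have hlen : (sdi α n).w.length ≤ u.length := hpre.length_le
      have hlen2 : (sdi α n).w.length ≠ u.length := by
        intro he
        apply hneq
        rw [← hu, ← he, good_code_alpha h0 h2 h]
      by_contra hcon
      push_neg at hcon
      have hrs : RightSpecial α (Code α α u.length) := by rw [hu]; exact hbs.1
      exact mid_not_rightSpecial hirr h0 h2 hn1 (by omega) hcon hrs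
  · -- part 3
    intro n hn1
    exact good_return h0 h2 (good_at hirr h0 h2 hn1)
end

section
/- For every n ≥ 1, the words of the recursion satisfy |P_n| + |M_n| = |w_n| + 2, and there exists a word Z_n such that P_nM_n = P_1M_1 Z_n = (rll)Z_n and M_nP_n = M_1P_1 Z_n = (lrl)Z_n (i.e. P_nM_n and M_nP_n are right extensions of P_1M_1 and M_1P_1 by the same word). -/
open Set

lemma sdi_aux (α : ℝ) : ∀ m : ℕ,
    ((SDI.step^[m] ⟨α, 1 - 2 * α, [false], [false], [true, false]⟩ : SDI).P.length +
      (SDI.step^[m] ⟨α, 1 - 2 * α, [false], [false], [true, false]⟩ : SDI).M.length =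
      (SDI.step^[m] ⟨α, 1 - 2 * α, [false], [false], [true, false]⟩ : SDI).w.length + 2) ∧
    ∃ Z : List Bool,
      (SDI.step^[m] ⟨α, 1 - 2 * α, [false], [false], [true, false]⟩ : SDI).P ++
        (SDI.step^[m] ⟨α, 1 - 2 * α, [false], [false], [true, false]⟩ : SDI).M
        = [true, false, false] ++ Z ∧
      (SDI.step^[m] ⟨α, 1 - 2 * α, [false], [false], [true, false]⟩ : SDI).M ++
        (SDI.step^[m] ⟨α, 1 - 2 * α, [false], [false], [true, false]⟩ : SDI).P
        = [false, true, false] ++ Z := by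
  intro m
  induction m with
  | zero => exact ⟨rfl, [], rfl, rfl⟩
  | succ m ih =>
    rw [Function.iterate_succ_apply']
    set t := (SDI.step^[m] ⟨α, 1 - 2 * α, [false], [false], [true, false]⟩ : SDI) with ht
    obtain ⟨hlen, Z, hPM, hMP⟩ := ih
    unfold SDI.step
    split
    · refine ⟨?_, Z ++ t.P, ?_, ?_⟩
      · simp only [List.length_append]; omega
      · simp only [← List.append_assoc, hPM]
      · simp only [← List.append_assoc, hMP]
    · refine ⟨?_, Z ++ t.M, ?_, ?_⟩
      · simp only [List.length_append]; omega
      · simp only [← List.append_assoc, hPM]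
      · simp only [← List.append_assoc, hMP]

/-- Lemma: for every `n ≥ 1`, `|P_n| + |M_n| = |w_n| + 2`, and there is a word `Z_n` with
`P_nM_n = (P_1M_1)Z_n = (rll)Z_n` and `M_nP_n = (M_1P_1)Z_n = (lrl)Z_n`
(letters: `l = false`, `r = true`). -/
theorem length_sum_and_common_extension
    (α : ℝ) (hirr : Irrational α) (h0 : 0 < α) (h2 : α < 1/2) :
    ∀ n : ℕ, 1 ≤ n →
      ((sdi α n).P.length + (sdi α n).M.length = (sdi α n).w.length + 2) ∧
      ∃ Z : List Bool,
        (sdi α n).P ++ (sdi α n).M = [true, false, false] ++ Z ∧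
        (sdi α n).M ++ (sdi α n).P = [false, true, false] ++ Z := by
  intro n _
  exact sdi_aux α (n-1)
end
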